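/- arXiv:1211.2987 — 5 statements merged into one kernel-verified Lean document; each statement's English description precedes it below -/
import Mathlib

section
/- With Δ_i = ∑_{j=0}^i q_{i-j}^{-1} ∏_{k=i-j+1}^{i}(p_k/q_k) and T(n) = ∑_{i=0}^{n-1} Δ_i, the expected hitting time of n starting from 0 for the nearest-neighbour walk on ℤ≥0 (reflected at 0) equals T(n), for every n ∈ ℤ≥0. -/
open MeasureTheory Filter Finset Real
open scoped ENNReal

noncomputable section

/-- One-step transition kernel for the nearest-neighbour walk on ℤ≥0 in environment `p`:
from `n ≥ 1` jump to `n-1` with probability `p n` and to `n+1` with probability `q n = 1 - p n`;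
from `0` stay at `0` with probability `p 0` and jump to `1` with probability `q 0`. -/
def step (p : ℕ → ℝ) (n m : ℕ) : ℝ :=
  if n = 0 then (if m = 0 then p 0 else if m = 1 then 1 - p 0 else 0)
  else (if m = n - 1 then p n else if m = n + 1 then 1 - p n else 0)

/-- `X` is (a version of) the quenched walk in environment `p` under the law `μ`:
it starts at `0` and has the (time-homogeneous) Markov property with transition kernel
`step p`, i.e. conditionally on the whole history up to time `t` with current state `x t`,
the next state is `m` with probability `step p (x t) m`. -/
def IsQuenchedWalk {Ω : Type*} [MeasurableSpace Ω] (μ : Measure Ω)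
    (X : ℕ → Ω → ℕ) (p : ℕ → ℝ) : Prop :=
  (∀ t, Measurable (X t)) ∧ (∀ᵐ ω ∂μ, X 0 ω = 0) ∧
  ∀ (t : ℕ) (x : ℕ → ℕ) (m : ℕ),
    μ {ω | X (t + 1) ω = m ∧ ∀ s ≤ t, X s ω = x s}
      = ENNReal.ofReal (step p (x t) m) * μ {ω | ∀ s ≤ t, X s ω = x s}

/-- First hitting time of `n` by the process `X` (with value `∞` if `n` is never hit). -/
def hitTime {Ω : Type*} (X : ℕ → Ω → ℕ) (n : ℕ) (ω : Ω) : ℝ≥0∞ :=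
  sInf ((fun t : ℕ => (t : ℝ≥0∞)) '' {t : ℕ | X t ω = n})

/-- `D_i = ∏_{j=0}^{i-1} p_j/q_j` (empty product is `1`). -/
def Denv (p : ℕ → ℝ) (i : ℕ) : ℝ := ∏ j ∈ Finset.range i, p j / (1 - p j)

/-- `f(n) = ∑_{i=0}^{n} D_i`. -/
def fenv (p : ℕ → ℝ) (n : ℕ) : ℝ := ∑ i ∈ Finset.range (n + 1), Denv p i

/-- `Δ_i = ∑_{j=0}^{i} q_{i-j}^{-1} ∏_{k=i-j+1}^{i} p_k/q_k`. -/
def DeltaEnv (p : ℕ → ℝ) (i : ℕ) : ℝ :=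
  ∑ j ∈ Finset.range (i + 1),
    (1 - p (i - j))⁻¹ * ∏ k ∈ Finset.Icc (i - j + 1) i, p k / (1 - p k)

/-- `T(n) = ∑_{i=0}^{n-1} Δ_i`, the expected hitting time of `n` from `0`. -/
def Texp (p : ℕ → ℝ) (n : ℕ) : ℝ := ∑ i ∈ Finset.range n, DeltaEnv p i

/-!
Write `τ` for the hitting time of `n`. Then `E τ = ∑ₜ P(τ > t) = ∑ⱼ G j`, where `G j` is the expected
number of visits to `j` before `τ`. The Markov property makes `G` the minimal nonnegative solution
of `G = δ₀ + G P` on `{0, …, n-1}` (with `G = 0` from `n` on). The explicit function `green` solves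
this system, so `G ≤ green` and `G` is finite. For finite solutions, summing the equations over
`{0, …, m}` turns them into the flux equations `q_m G m = 1 + p_{m+1} G (m+1)`, which fix `G`
downwards from `G n = 0`. Hence `G = green`, and `∑ⱼ green j = T(n)` is a change in the order
of summation.
-/

def green (p : ℕ → ℝ) (n j : ℕ) : ℝ :=
  ∑ k ∈ Ico j n, (1 - p j)⁻¹ * ∏ l ∈ Icc (j + 1) k, p l / (1 - p l)

/-- `(v P) m`; only the states `j ≤ m + 1` can step to `m`. -/
def inflow (p v : ℕ → ℝ) (m : ℕ) : ℝ := ∑ j ∈ range (m + 2), step p j m * v j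

section Environment

variable {p : ℕ → ℝ}

lemma step_nonneg (hp : ∀ i, p i ∈ Set.Ioo (0 : ℝ) 1) (j m : ℕ) : 0 ≤ step p j m := by
  have hq := fun i => sub_nonneg.2 (hp i).2.le
  unfold step
  split_ifs <;> first | exact (hp _).1.le | exact hq _ | exact le_rfl

lemma step_of_add_two_le {j m : ℕ} (h : m + 2 ≤ j) : step p j m = 0 := by
  unfold step
  split_ifs <;> first | rfl | omega

lemma step_of_add_two_le' {j m : ℕ} (h : j + 2 ≤ m) : step p j m = 0 := by
  unfold step
  split_ifs <;> first | rfl | omega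

lemma step_succ_self (m : ℕ) : step p (m + 1) (m + 1) = 0 := by
  simp [step]

lemma step_up (m : ℕ) : step p m (m + 1) = 1 - p m := by
  unfold step
  split_ifs <;> first | rfl | omega | simp_all

lemma step_down (m : ℕ) : step p (m + 1) m = p (m + 1) := by
  simp [step]

lemma inflow_zero (v : ℕ → ℝ) : inflow p v 0 = p 0 * v 0 + p 1 * v 1 := by
  simp [inflow, Finset.sum_range_succ, step]

lemma inflow_succ (v : ℕ → ℝ) (m : ℕ) :
    inflow p v (m + 1) = (1 - p m) * v m + p (m + 2) * v (m + 2) := by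
  have hfar : ∑ j ∈ range m, step p j (m + 1) * v j = 0 :=
    Finset.sum_eq_zero fun j hj => by
      rw [step_of_add_two_le' (by simp at hj; omega), zero_mul]
  rw [inflow, Finset.sum_range_succ, Finset.sum_range_succ, Finset.sum_range_succ, hfar,
    step_up, step_succ_self, step_down]
  ring

lemma inflow_nonneg (hp : ∀ i, p i ∈ Set.Ioo (0 : ℝ) 1) {v : ℕ → ℝ} (hv : ∀ j, 0 ≤ v j)
    (m : ℕ) : 0 ≤ inflow p v m :=
  Finset.sum_nonneg fun j _ => mul_nonneg (step_nonneg hp j m) (hv j)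

lemma flux_of_balance {n : ℕ} {v : ℕ → ℝ}
    (hv : ∀ m < n, v m = (if m = 0 then 1 else 0) + inflow p v m) :
    ∀ m < n, (1 - p m) * v m = 1 + p (m + 1) * v (m + 1) := by
  intro m hm
  induction m with
  | zero =>
    have h0 := hv 0 hm
    rw [if_pos rfl, inflow_zero] at h0
    linarith
  | succ m ih =>
    have h1 := hv (m + 1) hm
    rw [if_neg m.succ_ne_zero, inflow_succ] at h1
    linarith [ih (by omega)]

lemma balance_of_flux {n : ℕ} {v : ℕ → ℝ}
    (hv : ∀ m < n, (1 - p m) * v m = 1 + p (m + 1) * v (m + 1)) :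
    ∀ m < n, v m = (if m = 0 then 1 else 0) + inflow p v m := by
  rintro (_ | m) hm
  · rw [if_pos rfl, inflow_zero]
    linarith [hv 0 hm]
  · rw [if_neg m.succ_ne_zero, inflow_succ]
    linarith [hv m (by omega), hv (m + 1) hm]

lemma green_of_le {n j : ℕ} (h : n ≤ j) : green p n j = 0 := by
  rw [green, Finset.Ico_eq_empty_of_le h, Finset.sum_empty]

lemma green_nonneg (hp : ∀ i, p i ∈ Set.Ioo (0 : ℝ) 1) (n j : ℕ) : 0 ≤ green p n j :=
  Finset.sum_nonneg fun _ _ => mul_nonneg (inv_nonneg.2 (sub_pos.2 (hp j).2).le)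
    (Finset.prod_nonneg fun l _ => div_nonneg (hp l).1.le (sub_pos.2 (hp l).2).le)

lemma green_flux (hp : ∀ i, p i ∈ Set.Ioo (0 : ℝ) 1) {n j : ℕ} (h : j < n) :
    (1 - p j) * green p n j = 1 + p (j + 1) * green p n (j + 1) := by
  have hq : ∀ i, 1 - p i ≠ 0 := fun i => (sub_pos.2 (hp i).2).ne'
  rw [green, green, Finset.mul_sum, Finset.mul_sum, Finset.sum_eq_sum_Ico_succ_bot h,
    Finset.Icc_eq_empty (by omega), Finset.prod_empty, mul_inv_cancel_left₀ (hq j)]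
  refine congrArg (1 + ·) (Finset.sum_congr rfl fun k hk => ?_)
  rw [Finset.Icc_eq_cons_Ioc (by simp at hk; omega), Finset.prod_cons,
    ← Finset.Icc_add_one_left_eq_Ioc, mul_inv_cancel_left₀ (hq j)]
  field_simp

lemma green_balance (hp : ∀ i, p i ∈ Set.Ioo (0 : ℝ) 1) {n : ℕ} :
    ∀ m < n, green p n m = (if m = 0 then 1 else 0) + inflow p (green p n) m :=
  balance_of_flux fun _ => green_flux hp

lemma eq_green_of_balance (hp : ∀ i, p i ∈ Set.Ioo (0 : ℝ) 1) {n : ℕ} {v : ℕ → ℝ}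
    (hv : ∀ m < n, v m = (if m = 0 then 1 else 0) + inflow p v m) (hvn : v n = 0) {j : ℕ}
    (hj : j ≤ n) : v j = green p n j := by
  induction hj using Nat.decreasingInduction with
  | self => rw [hvn, green_of_le le_rfl]
  | of_succ k hk ih =>
    refine mul_left_cancel₀ (sub_pos.2 (hp k).2).ne' ?_
    rw [flux_of_balance hv k hk, green_flux hp hk, ih]

lemma sum_green (n : ℕ) : ∑ j ∈ range n, green p n j = Texp p n := by
  have hDelta : ∀ i, DeltaEnv p i
      = ∑ j ∈ range (i + 1), (1 - p j)⁻¹ * ∏ l ∈ Icc (j + 1) i, p l / (1 - p l) := fun i => by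
    rw [DeltaEnv, ← Finset.sum_range_reflect]
    refine Finset.sum_congr rfl fun j hj => ?_
    rw [Nat.add_sub_cancel, Nat.sub_sub_self (by simp at hj; omega)]
  simp only [Texp, hDelta, green, Finset.range_eq_Ico, Finset.sum_Ico_Ico_comm]

lemma ofReal_source_add_inflow (hp : ∀ i, p i ∈ Set.Ioo (0 : ℝ) 1) {v : ℕ → ℝ}
    (hv : ∀ j, 0 ≤ v j) (m : ℕ) :
    ENNReal.ofReal ((if m = 0 then 1 else 0) + inflow p v m)
      = (if m = 0 then 1 else 0) + ∑' j, ENNReal.ofReal (step p j m) * ENNReal.ofReal (v j) := by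
  have hsum : ∑' j, ENNReal.ofReal (step p j m) * ENNReal.ofReal (v j)
      = ENNReal.ofReal (inflow p v m) := by
    rw [tsum_eq_sum (s := range (m + 2)) fun j hj => by
        rw [step_of_add_two_le (by simpa using hj), ENNReal.ofReal_zero, zero_mul],
      inflow, ENNReal.ofReal_sum_of_nonneg fun j _ => mul_nonneg (step_nonneg hp j m) (hv j)]
    simp_rw [ENNReal.ofReal_mul (step_nonneg hp _ m)]
  rw [hsum, ENNReal.ofReal_add (by positivity) (inflow_nonneg hp hv m)]
  split_ifs <;> simp

end Environment

lemma measure_preimage_inter_eq_tsum {α β : Type*} [MeasurableSpace α] [MeasurableSpace β]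
    [Countable β] [MeasurableSingletonClass β] {μ : Measure α} {f : α → β} (hf : Measurable f)
    (B : Set β) (C : Set α) :
    μ (f ⁻¹' B ∩ C) = ∑' y, B.indicator (fun y => μ (f ⁻¹' {y} ∩ C)) y := by
  have hB := Measure.tsum_indicator_apply_singleton ((μ.restrict C).map f) B
    (Set.to_countable B).measurableSet
  simp only [Measure.map_apply hf (measurableSet_singleton _),
    Measure.map_apply hf (Set.to_countable B).measurableSet,
    Measure.restrict_apply (hf (measurableSet_singleton _)),
    Measure.restrict_apply (hf (Set.to_countable B).measurableSet)] at hB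
  exact hB.symm

section HittingTime

variable {Ω : Type*} {X : ℕ → Ω → ℕ}

def notHitUntil (X : ℕ → Ω → ℕ) (n t : ℕ) : Set Ω := {ω | ∀ s ≤ t, X s ω ≠ n}

def trajectory (X : ℕ → Ω → ℕ) (t : ℕ) (ω : Ω) : Fin (t + 1) → ℕ := fun i => X i ω

lemma notHitUntil_eq_preimage (n t : ℕ) :
    notHitUntil X n t = trajectory X t ⁻¹' {y | ∀ i, y i ≠ n} := by
  ext ω
  simp [notHitUntil, trajectory, Fin.forall_iff]

lemma preimage_trajectory_singleton (t : ℕ) (y : Fin (t + 1) → ℕ) :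
    trajectory X t ⁻¹' {y} = {ω | ∀ s ≤ t, X s ω = Function.extend Fin.val y 0 s} := by
  ext ω
  simp only [Set.mem_preimage, Set.mem_singleton_iff, Set.mem_ofPred_eq, funext_iff, trajectory,
    Fin.forall_iff, Nat.lt_succ_iff]
  refine forall₂_congr fun s hs => ?_
  rw [show Function.extend Fin.val y 0 s = y ⟨s, _⟩ from
    Fin.val_injective.extend_apply y 0 ⟨s, Nat.lt_succ_of_le hs⟩]

lemma hitTime_eq_tsum_indicator (n : ℕ) (ω : Ω) :
    hitTime X n ω = ∑' t, (notHitUntil X n t).indicator 1 ω := by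
  by_cases hhit : ∃ t, X t ω = n
  · classical
    have hfind : hitTime X n ω = Nat.find hhit :=
      le_antisymm (sInf_le ⟨_, Nat.find_spec hhit, rfl⟩)
        (le_sInf <| by rintro _ ⟨t, ht, rfl⟩; exact Nat.cast_le.2 (Nat.find_min' hhit ht))
    have hnot : ∀ t, ω ∈ notHitUntil X n t ↔ t < Nat.find hhit := fun t => by
      simp [notHitUntil, Nat.lt_find_iff]
    rw [hfind, tsum_eq_sum (s := range (Nat.find hhit)) fun t ht => by simpa [hnot] using ht,
      Finset.sum_congr rfl fun t ht => Set.indicator_of_mem ((hnot t).2 (Finset.mem_range.1 ht)) _]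
    simp
  · push Not at hhit
    have htop : hitTime X n ω = ⊤ := by
      simp [hitTime, hhit]
    have hnot : ∀ t, ω ∈ notHitUntil X n t := fun t s _ => hhit s
    simp [htop, Set.indicator_of_mem (hnot _)]

variable [MeasurableSpace Ω]

lemma measurable_trajectory (hmeas : ∀ t, Measurable (X t)) (t : ℕ) :
    Measurable (trajectory X t) :=
  measurable_pi_lambda _ fun i => hmeas i

lemma measurableSet_notHitUntil (hmeas : ∀ t, Measurable (X t)) (n t : ℕ) :
    MeasurableSet (notHitUntil X n t) := by
  rw [notHitUntil_eq_preimage]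
  exact measurable_trajectory hmeas t (Set.to_countable _).measurableSet

lemma lintegral_hitTime_eq_tsum (μ : Measure Ω) (hmeas : ∀ t, Measurable (X t)) (n : ℕ) :
    ∫⁻ ω, hitTime X n ω ∂μ = ∑' t, μ (notHitUntil X n t) := by
  simp_rw [hitTime_eq_tsum_indicator]
  rw [lintegral_tsum fun t =>
    (measurable_one.indicator (measurableSet_notHitUntil hmeas n t)).aemeasurable]
  exact tsum_congr fun t => lintegral_indicator_one (measurableSet_notHitUntil hmeas n t)

end HittingTime

section Occupation

variable {Ω : Type*} [MeasurableSpace Ω] {μ : Measure Ω} {X : ℕ → Ω → ℕ} {p : ℕ → ℝ}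

def occupation (μ : Measure Ω) (X : ℕ → Ω → ℕ) (n t j : ℕ) : ℝ≥0∞ :=
  μ (notHitUntil X n t ∩ {ω | X t ω = j})

def expectedVisits (μ : Measure Ω) (X : ℕ → Ω → ℕ) (n j : ℕ) : ℝ≥0∞ :=
  ∑' t, occupation μ X n t j

lemma measure_notHitUntil_eq_tsum_occupation (hmeas : ∀ t, Measurable (X t)) (n t : ℕ) :
    μ (notHitUntil X n t) = ∑' j, occupation μ X n t j := by
  have h := measure_preimage_inter_eq_tsum (μ := μ) (hmeas t) Set.univ (notHitUntil X n t)
  simp only [Set.preimage_univ, Set.univ_inter, Set.indicator_univ] at h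
  simp_rw [h, occupation, Set.inter_comm]
  rfl

namespace IsQuenchedWalk

lemma measure_trajectory_inter_succ (hX : IsQuenchedWalk μ X p) (t m : ℕ)
    (y : Fin (t + 1) → ℕ) :
    μ (trajectory X t ⁻¹' {y} ∩ {ω | X (t + 1) ω = m})
      = ENNReal.ofReal (step p (y (Fin.last t)) m) * μ (trajectory X t ⁻¹' {y}) := by
  have hlast : Function.extend Fin.val y 0 t = y (Fin.last t) :=
    Fin.val_injective.extend_apply y 0 (Fin.last t)
  rw [preimage_trajectory_singleton, ← hlast, ← hX.2.2 t, Set.inter_comm]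
  rfl

lemma measure_preimage_inter_succ (hX : IsQuenchedWalk μ X p) (t m : ℕ)
    (B : Set (Fin (t + 1) → ℕ)) :
    μ (trajectory X t ⁻¹' B ∩ {ω | X (t + 1) ω = m})
      = ∑' j, ENNReal.ofReal (step p j m) * μ (trajectory X t ⁻¹' B ∩ {ω | X t ω = j}) := by
  have hcyl : ∀ j y, trajectory X t ⁻¹' {y} ∩ {ω | X t ω = j}
      = if y (Fin.last t) = j then trajectory X t ⁻¹' {y} else ∅ := fun j y => by
    ext ω
    split_ifs with h <;> simp only [trajectory, Set.mem_inter_iff, Set.mem_preimage,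
      Set.mem_singleton_iff, funext_iff, Set.mem_ofPred_eq, Set.mem_empty_iff_false, iff_false,
      not_and, and_iff_left_iff_imp]
    · exact fun hy => h ▸ hy (Fin.last t)
    · exact fun hy hj => h ((hy (Fin.last t)).symm.trans hj)
  simp_rw [measure_preimage_inter_eq_tsum (measurable_trajectory hX.1 t) B,
    measure_trajectory_inter_succ hX, hcyl, ← ENNReal.tsum_mul_left]
  rw [ENNReal.tsum_comm]
  refine tsum_congr fun y => ?_
  by_cases hy : y ∈ B <;> simp [hy, apply_ite]

lemma map_zero_eq_dirac [IsProbabilityMeasure μ] (hX : IsQuenchedWalk μ X p) :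
    μ.map (X 0) = Measure.dirac 0 := by
  rw [Measure.map_congr hX.2.1, Measure.map_const, measure_univ, one_smul]

lemma occupation_zero [IsProbabilityMeasure μ] (hX : IsQuenchedWalk μ X p) (n j : ℕ) :
    occupation μ X n 0 j = if j = 0 ∧ n ≠ 0 then 1 else 0 := by
  have hset : notHitUntil X n 0 ∩ {ω | X 0 ω = j} = X 0 ⁻¹' ({n}ᶜ ∩ {j}) := by
    ext ω
    simp [notHitUntil]
  rw [occupation, hset, ← Measure.map_apply (hX.1 0) (Set.to_countable _).measurableSet,
    hX.map_zero_eq_dirac, Measure.dirac_apply]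
  by_cases hj : j = 0 <;> by_cases hn : n = 0 <;> simp [hj, hn, eq_comm]

lemma occupation_zero_of_lt [IsProbabilityMeasure μ] (hX : IsQuenchedWalk μ X p) {n j : ℕ}
    (hj : j < n) : occupation μ X n 0 j = if j = 0 then 1 else 0 := by
  simp [hX.occupation_zero, (Nat.zero_lt_of_lt hj).ne']

lemma occupation_succ (hX : IsQuenchedWalk μ X p) (n t m : ℕ) :
    occupation μ X n (t + 1) m
      = if m = n then 0 else ∑' j, ENNReal.ofReal (step p j m) * occupation μ X n t j := by
  split_ifs with hmn
  · refine measure_mono_null (fun ω hω => ?_) measure_empty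
    exact hω.1 (t + 1) le_rfl (hmn ▸ hω.2)
  · have hset : notHitUntil X n (t + 1) ∩ {ω | X (t + 1) ω = m}
        = notHitUntil X n t ∩ {ω | X (t + 1) ω = m} := by
      ext ω
      simp only [notHitUntil, Set.mem_inter_iff, Set.mem_ofPred_eq, Nat.le_succ_iff]
      constructor
      · exact fun ⟨h, hm⟩ => ⟨fun s hs => h s (Or.inl hs), hm⟩
      · rintro ⟨h, hm⟩
        exact ⟨fun s => Or.rec (h s) (by rintro rfl; exact hm ▸ hmn), hm⟩
    simp_rw [occupation, hset, notHitUntil_eq_preimage]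
    exact hX.measure_preimage_inter_succ t m _

lemma occupation_of_le [IsProbabilityMeasure μ] (hX : IsQuenchedWalk μ X p) {n j : ℕ}
    (hj : n ≤ j) (t : ℕ) : occupation μ X n t j = 0 := by
  induction t generalizing j with
  | zero => rw [hX.occupation_zero, if_neg (by omega)]
  | succ t ih =>
    rw [hX.occupation_succ, ite_eq_left_iff]
    refine fun _ => ENNReal.tsum_eq_zero.2 fun i => ?_
    rcases le_or_gt n i with hi | hi
    · rw [ih hi, mul_zero]
    · rw [step_of_add_two_le' (by omega), ENNReal.ofReal_zero, zero_mul]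

lemma expectedVisits_of_le [IsProbabilityMeasure μ] (hX : IsQuenchedWalk μ X p) {n j : ℕ}
    (hj : n ≤ j) : expectedVisits μ X n j = 0 :=
  ENNReal.tsum_eq_zero.2 (hX.occupation_of_le hj)

lemma expectedVisits_eq [IsProbabilityMeasure μ] (hX : IsQuenchedWalk μ X p) {n m : ℕ}
    (hm : m < n) :
    expectedVisits μ X n m
      = (if m = 0 then 1 else 0) + ∑' j, ENNReal.ofReal (step p j m) * expectedVisits μ X n j := by
  rw [expectedVisits, tsum_eq_zero_add' ENNReal.summable, hX.occupation_zero_of_lt hm]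
  simp only [hX.occupation_succ, if_neg hm.ne, expectedVisits, ← ENNReal.tsum_mul_left]
  rw [ENNReal.tsum_comm]

lemma expectedVisits_le [IsProbabilityMeasure μ] (hX : IsQuenchedWalk μ X p) {n : ℕ}
    {g : ℕ → ℝ≥0∞}
    (hg : ∀ m < n, (if m = 0 then 1 else 0) + ∑' j, ENNReal.ofReal (step p j m) * g j ≤ g m)
    (j : ℕ) : expectedVisits μ X n j ≤ g j := by
  suffices hpartial : ∀ N j, ∑ t ∈ range N, occupation μ X n t j ≤ g j from
    ENNReal.tsum_le_of_sum_range_le fun N => hpartial N j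
  intro N
  induction N with
  | zero => simp
  | succ N ih =>
    intro j
    rcases lt_or_ge j n with hj | hj
    · calc ∑ t ∈ range (N + 1), occupation μ X n t j
          = (if j = 0 then 1 else 0)
            + ∑' i, ENNReal.ofReal (step p i j) * ∑ t ∈ range N, occupation μ X n t i := by
            simp only [Finset.sum_range_succ', hX.occupation_succ, if_neg hj.ne, Finset.mul_sum,
              hX.occupation_zero_of_lt hj, ← Summable.tsum_finsetSum fun _ _ => ENNReal.summable]
            rw [add_comm]
        _ ≤ (if j = 0 then 1 else 0) + ∑' i, ENNReal.ofReal (step p i j) * g i := by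
            gcongr with i
            exact ih i
        _ ≤ g j := hg j hj
    · simp [hX.occupation_of_le hj]

lemma expectedVisits_eq_ofReal_green [IsProbabilityMeasure μ] (hX : IsQuenchedWalk μ X p)
    (hp : ∀ i, p i ∈ Set.Ioo (0 : ℝ) 1) (n j : ℕ) :
    expectedVisits μ X n j = ENNReal.ofReal (green p n j) := by
  have hle : ∀ j, expectedVisits μ X n j ≤ ENNReal.ofReal (green p n j) :=
    hX.expectedVisits_le fun m hm => by
      rw [← ofReal_source_add_inflow hp (green_nonneg hp n), ← green_balance hp m hm]
  obtain ⟨v, hv_nonneg, hv⟩ : ∃ v : ℕ → ℝ,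
      (∀ j, 0 ≤ v j) ∧ ∀ j, expectedVisits μ X n j = ENNReal.ofReal (v j) :=
    ⟨fun j => (expectedVisits μ X n j).toReal, fun _ => ENNReal.toReal_nonneg, fun j =>
      (ENNReal.ofReal_toReal (ne_top_of_le_ne_top ENNReal.ofReal_ne_top (hle j))).symm⟩
  have hbalance : ∀ m < n, v m = (if m = 0 then 1 else 0) + inflow p v m := fun m hm => by
    have h := hX.expectedVisits_eq hm
    rwa [funext hv, ← ofReal_source_add_inflow hp hv_nonneg, ENNReal.ofReal_eq_ofReal_iff
      (hv_nonneg m) (add_nonneg (by positivity) (inflow_nonneg hp hv_nonneg m))] at h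
  have hvn : v n = 0 := le_antisymm
    (ENNReal.ofReal_eq_zero.1 ((hv n).symm.trans (hX.expectedVisits_of_le le_rfl))) (hv_nonneg n)
  rcases le_or_gt j n with hj | hj
  · rw [hv, eq_green_of_balance hp hbalance hvn hj]
  · rw [hX.expectedVisits_of_le hj.le, green_of_le hj.le, ENNReal.ofReal_zero]

end IsQuenchedWalk

end Occupation

/-- for the quenched nearest-neighbour walk on ℤ≥0 (reflected at 0, started
at 0) in an environment with `p i ∈ (0,1)`, the expected first hitting time of `n` equals
`T(n) = ∑_{i=0}^{n-1} Δ_i`, for every `n`. -/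
theorem statement3 {Ω : Type*} [MeasurableSpace Ω] (μ : Measure Ω) [IsProbabilityMeasure μ]
    (X : ℕ → Ω → ℕ) (p : ℕ → ℝ) (hp : ∀ i, p i ∈ Set.Ioo (0 : ℝ) 1)
    (hX : IsQuenchedWalk μ X p) (n : ℕ) :
    ∫⁻ ω, hitTime X n ω ∂μ = ENNReal.ofReal (Texp p n) := by
  calc ∫⁻ ω, hitTime X n ω ∂μ
      = ∑' t, ∑' j, occupation μ X n t j := by
        simp_rw [lintegral_hitTime_eq_tsum μ hX.1, measure_notHitUntil_eq_tsum_occupation hX.1]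
    _ = ∑' j, expectedVisits μ X n j := ENNReal.tsum_comm
    _ = ∑ j ∈ range n, expectedVisits μ X n j :=
        tsum_eq_sum fun j hj => hX.expectedVisits_of_le (by simpa using hj)
    _ = ENNReal.ofReal (Texp p n) := by
        simp_rw [hX.expectedVisits_eq_ofReal_green hp, ← sum_green,
          ENNReal.ofReal_sum_of_nonneg fun j _ => green_nonneg hp n j]
end
end

section
/- For any environment ω with p_i ∈ (0,1) and any n ∈ ℤ≥0, T(n) ≤ 2 n² exp( 2 max_{0 ≤ i ≤ n-1} | ∑_{j=0}^i log(p_j/q_j) | ), where T(n) = ∑_{i=0}^{n-1} ∑_{j=0}^i q_{i-j}^{-1} ∏_{k=i-j+1}^{i}(p_k/q_k). -/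
open MeasureTheory Filter Finset Real
open scoped ENNReal

noncomputable section

/-
With `ρ k = p k / q k` and `S a = ∑_{k<a} log ρ k`, a product of consecutive `ρ k` is
`exp (S b - S a) ≤ exp (2 M)`, where `M` bounds `|S a|` for `a ≤ n`. Since `q m⁻¹ = 1 + ρ m`,
each summand of `Δ i` is the sum of two such products, so `Δ i ≤ (i + 1) · 2 exp (2 M)`,
and summing over `i < n` gives `T n ≤ 2 n² exp (2 M)`.
-/

theorem le_iSup_mem_finset {ι : Type*} {f : ι → ℝ} {s : Finset ι} {i : ι} (hi : i ∈ s) :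
    f i ≤ ⨆ j ∈ s, f j := by
  refine le_ciSup₂ (f := fun j (_ : j ∈ s) => f j) ((s.image f).bddAbove.mono ?_) i hi
  simp only [Set.iUnion_subset_iff, Set.range_subset_iff, coe_image]
  exact fun j hj => Set.mem_image_of_mem f hj

theorem iSup_mem_finset_nonneg {ι : Type*} {f : ι → ℝ} (hf : ∀ i, 0 ≤ f i) (s : Finset ι) :
    0 ≤ ⨆ j ∈ s, f j :=
  Real.iSup_nonneg fun _ => Real.iSup_nonneg fun _ => hf _

theorem prod_Ico_le_exp_abs_add_abs {r : ℕ → ℝ} (hr : ∀ k, 0 < r k) {a b : ℕ} (hab : a ≤ b) :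
    ∏ k ∈ Ico a b, r k ≤
      exp (|∑ k ∈ range b, log (r k)| + |∑ k ∈ range a, log (r k)|) := by
  have hprod : ∏ k ∈ Ico a b, r k = exp (∑ k ∈ Ico a b, log (r k)) := by
    rw [exp_sum]
    exact prod_congr rfl fun k _ => (exp_log (hr k)).symm
  rw [hprod, sum_Ico_eq_sub _ hab, exp_le_exp]
  linarith [le_abs_self (∑ k ∈ range b, log (r k)), neg_abs_le (∑ k ∈ range a, log (r k))]

theorem inv_one_sub_mul_prod_Icc_eq {p : ℕ → ℝ} (hp : ∀ k, p k ≠ 1) {m i : ℕ} (hmi : m ≤ i) :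
    (1 - p m)⁻¹ * ∏ k ∈ Icc (m + 1) i, p k / (1 - p k) =
      ∏ k ∈ Ico (m + 1) (i + 1), p k / (1 - p k) + ∏ k ∈ Ico m (i + 1), p k / (1 - p k) := by
  have hq : 1 - p m ≠ 0 := sub_ne_zero.2 (hp m).symm
  rw [prod_eq_prod_Ico_succ_bot (by omega : m < i + 1), Ico_add_one_right_eq_Icc]
  field_simp
  ring

theorem DeltaEnv_le {p : ℕ → ℝ} (hp : ∀ k, p k ∈ Set.Ioo (0 : ℝ) 1) {i : ℕ} {M : ℝ}
    (hM : ∀ a ≤ i + 1, |∑ k ∈ range a, log (p k / (1 - p k))| ≤ M) :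
    DeltaEnv p i ≤ (i + 1) * (2 * exp (2 * M)) := by
  have hρ : ∀ k, 0 < p k / (1 - p k) := fun k => div_pos (hp k).1 (sub_pos.2 (hp k).2)
  have hprod : ∀ a b, a ≤ b → b ≤ i + 1 →
      ∏ k ∈ Ico a b, p k / (1 - p k) ≤ exp (2 * M) := fun a b hab hb =>
    (prod_Ico_le_exp_abs_add_abs hρ hab).trans
      (exp_le_exp.2 (by linarith [hM a (hab.trans hb), hM b hb]))
  calc DeltaEnv p i ≤ #(range (i + 1)) • (2 * exp (2 * M)) := by
        refine sum_le_card_nsmul _ _ _ fun j hj => ?_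
        rw [inv_one_sub_mul_prod_Icc_eq (fun k => (hp k).2.ne) (Nat.sub_le i j)]
        linarith [hprod (i - j + 1) (i + 1) (by omega) le_rfl,
          hprod (i - j) (i + 1) (by omega) le_rfl]
    _ = (i + 1) * (2 * exp (2 * M)) := by simp

/-- for any environment with `p i ∈ (0,1)` and any `n`,
`T(n) ≤ 2 n² exp( 2 max_{0 ≤ i ≤ n-1} | ∑_{j=0}^i log(p_j/q_j) | )`. -/
theorem statement7 (p : ℕ → ℝ) (hp : ∀ i, p i ∈ Set.Ioo (0 : ℝ) 1) (n : ℕ) :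
    Texp p n ≤ 2 * (n : ℝ) ^ 2 *
      Real.exp (2 * ⨆ i ∈ Finset.range n,
        |∑ j ∈ Finset.range (i + 1), Real.log (p j / (1 - p j))|) := by
  set M := ⨆ i ∈ range n, |∑ j ∈ range (i + 1), log (p j / (1 - p j))|
  set S : ℕ → ℝ := fun a => ∑ k ∈ range a, log (p k / (1 - p k))
  have hM : ∀ a ≤ n, |S a| ≤ M := by
    rintro (_ | a) ha
    · simp only [S, range_zero, sum_empty, abs_zero]
      exact iSup_mem_finset_nonneg (fun _ => abs_nonneg _) _
    · exact le_iSup_mem_finset (f := fun i => |S (i + 1)|) (mem_range.2 ha)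
  calc Texp p n ≤ #(range n) • (n * (2 * exp (2 * M))) := by
        refine sum_le_card_nsmul _ _ _ fun i hi => ?_
        have hin : i < n := mem_range.1 hi
        refine (DeltaEnv_le hp fun a ha => hM a (by omega)).trans ?_
        gcongr
        exact_mod_cast hin
    _ = 2 * (n : ℝ) ^ 2 * exp (2 * M) := by rw [card_range, nsmul_eq_mul]; ring
end
end

section
/- Let g, h : ℤ≥0 → [0,∞) be non-negative increasing functions with, for a.e. environment ω: (i) T(n) ≤ h(n) for all but finitely many n, and (ii) T(n) ≤ g(n) for infinitely many n; and suppose ∑_{n≥1} h(n)/g(n^{3/2}) < ∞ and g(n^{3/4})/g(n) → 0. Then for a.e. ω, for any ε > 0, the walk satisfies P_ω-almost surely X_t ≥ g^{-1}((1-ε)t) for infinitely many t. -/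
open MeasureTheory Filter Finset Real
open scoped ENNReal

noncomputable section

/-!
Fix an environment and `ε > 0`, and pick levels `a k` with `E τ_{a k} ≤ g (a k)`,
`E τ_{a k} ≤ h (a k)` and `a (k + 1) ≥ (a k) ^ (3/2)`. Markov's inequality and the summability of
`h n / g (n ^ (3/2))` give, by Borel–Cantelli, `τ_{a k} < (ε/4) g (a (k + 1))` eventually. By the
strong Markov property at `τ_{a k}`, the walk needs more than `L = ⌈(1 + ε/2) g (a (k + 1))⌉`
further steps to reach `a (k + 1)` with conditional probability at most `(1 + ε/2)⁻¹`, for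
otherwise `E τ_{a (k + 1)}` would exceed `g (a (k + 1))`; so a.s. it needs fewer infinitely often.
At those times `t = τ_{a (k + 1)} ≤ (1 + ε) g (a (k + 1))`, hence `(1 - ε) t ≤ g (X t)`.
-/

lemma exists_strictMono_forall_of_frequently {P : ℕ → Prop} (hP : ∃ᶠ n in atTop, P n)
    (φ : ℕ → ℕ) (N : ℕ) :
    ∃ a : ℕ → ℕ, StrictMono a ∧ N ≤ a 0 ∧ (∀ k, P (a k)) ∧ ∀ k, φ (a k) ≤ a (k + 1) := by
  choose pick hpick_ge hpick using fun n => frequently_atTop.mp hP n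
  let a : ℕ → ℕ := fun k => Nat.rec (pick N) (fun _ ak => pick (max (ak + 1) (φ ak))) k
  have ha_succ : ∀ k, a (k + 1) = pick (max (a k + 1) (φ (a k))) := fun k => rfl
  refine ⟨a, strictMono_nat_of_lt_succ fun k => ?_, hpick_ge N, fun k => ?_, fun k => ?_⟩
  · rw [ha_succ]
    exact (le_max_left _ _).trans (hpick_ge _)
  · cases k <;> exact hpick _
  · rw [ha_succ]
    exact (le_max_right _ _).trans (hpick_ge _)

lemma ae_eventually_lt_ofReal_of_summable {α : Type*} [MeasurableSpace α] {μ : Measure α}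
    {Y : ℕ → α → ℝ≥0∞} (hY : ∀ k, AEMeasurable (Y k) μ) {H G : ℕ → ℝ}
    (hYH : ∀ k, ∫⁻ x, Y k x ∂μ ≤ ENNReal.ofReal (H k)) (hG : ∀ k, 0 < G k)
    (hsum : Summable fun k => H k / G k) :
    ∀ᵐ x ∂μ, ∀ᶠ k in atTop, Y k x < ENNReal.ofReal (G k) := by
  have hmarkov : ∀ k, μ {x | ENNReal.ofReal (G k) ≤ Y k x} ≤ ENNReal.ofReal (H k / G k) := by
    intro k
    rw [ENNReal.ofReal_div_of_pos (hG k)]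
    exact (meas_ge_le_lintegral_div (hY k) (by simpa using hG k) ENNReal.ofReal_ne_top).trans
      (by gcongr; exact hYH k)
  filter_upwards [ae_eventually_notMem
    (ne_top_of_le_ne_top hsum.tsum_ofReal_ne_top (ENNReal.tsum_le_tsum hmarkov))] with x hx
  exact hx.mono fun k hk => not_le.mp hk

lemma summable_div_comp_of_rpow_le {g h : ℝ → ℝ} (hh0 : ∀ x, 0 ≤ h x) (hgmono : Monotone g)
    (hsum : Summable (fun n : ℕ => h n / g ((n : ℝ) ^ ((3 : ℝ) / 2)))) {a : ℕ → ℕ}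
    (ha : Function.Injective a) (ha1 : ∀ k, (1 : ℝ) ≤ a k) (hgpos : ∀ k, 0 < g (a k))
    (hgrowth : ∀ k, (a k : ℝ) ^ ((3 : ℝ) / 2) ≤ a (k + 1)) {δ : ℝ} (hδ : 0 < δ) :
    Summable fun k => h (a k) / (δ * g (a (k + 1))) := by
  refine .of_nonneg_of_le (fun k => div_nonneg (hh0 _) (by have := hgpos (k + 1); positivity))
    (fun k => ?_) ((hsum.comp_injective ha).mul_left δ⁻¹)
  have hpow : (a k : ℝ) ≤ (a k : ℝ) ^ ((3 : ℝ) / 2) :=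
    Real.self_le_rpow_of_one_le (ha1 k) (by norm_num)
  calc h (a k) / (δ * g (a (k + 1))) = δ⁻¹ * (h (a k) / g (a (k + 1))) := by
        rw [mul_comm, ← div_div, div_eq_inv_mul]
    _ ≤ δ⁻¹ * (h (a k) / g ((a k : ℝ) ^ ((3 : ℝ) / 2))) := by
        gcongr
        exacts [hh0 _, (hgpos k).trans_le (hgmono hpow), hgmono (hgrowth k)]

lemma frequently_le_ofReal_of_frequently_le_add {u : ℕ → ℝ≥0∞} {G : ℕ → ℝ} {ε : ℝ} (hε : 0 < ε)
    (hfast : ∃ᶠ k in atTop, u (k + 1) ≤ u k + ⌈(1 + ε / 2) * G k⌉₊)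
    (hearly : ∀ᶠ k in atTop, u k < ENNReal.ofReal (ε / 4 * G k))
    (hlarge : ∀ᶠ k in atTop, 4 ≤ ε * G k) :
    ∃ᶠ k in atTop, u (k + 1) ≤ ENNReal.ofReal ((1 + ε) * G k) := by
  refine (hfast.and_eventually (hearly.and hlarge)).mono fun k ⟨hk_fast, hk_early, hk_large⟩ => ?_
  have hG : 0 < G k := pos_of_mul_pos_right (by linarith) hε.le
  have hceil := Nat.ceil_lt_add_one (show 0 ≤ (1 + ε / 2) * G k by positivity)
  calc u (k + 1) ≤ ENNReal.ofReal (ε / 4 * G k) + ENNReal.ofReal ⌈(1 + ε / 2) * G k⌉₊ := by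
        rw [ENNReal.ofReal_natCast]
        exact hk_fast.trans (by gcongr)
    _ ≤ ENNReal.ofReal ((1 + ε) * G k) := by
        rw [← ENNReal.ofReal_add (by positivity) (Nat.cast_nonneg _)]
        exact ENNReal.ofReal_le_ofReal (by linarith)

namespace QuenchedWalk

variable {Ω : Type*} {X : ℕ → Ω → ℕ} {ω ω' : Ω} {a b c n s t : ℕ}

section HittingTimes

lemma hitTime_eq_find (h : ∃ t, X t ω = n) : hitTime X n ω = Nat.find h := by
  refine le_antisymm (sInf_le ⟨_, Nat.find_spec h, rfl⟩) (le_sInf ?_)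
  rintro _ ⟨s, hs, rfl⟩
  exact Nat.cast_le.mpr (Nat.find_min' h hs)

lemma hitTime_eq_top (h : ¬∃ t, X t ω = n) : hitTime X n ω = ⊤ := by
  rw [hitTime, sInf_eq_top]
  rintro _ ⟨s, hs, rfl⟩
  exact absurd ⟨s, hs⟩ h

lemma hitTime_le_iff : hitTime X n ω ≤ t ↔ ∃ s ≤ t, X s ω = n := by
  by_cases h : ∃ t, X t ω = n
  · rw [hitTime_eq_find h, Nat.cast_le, Nat.find_le_iff]
  · simp only [hitTime_eq_top h, top_le_iff, ENNReal.natCast_ne_top, false_iff]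
    exact fun ⟨s, _, hs⟩ => h ⟨s, hs⟩

lemma hitTime_eq_iff : hitTime X n ω = t ↔ X t ω = n ∧ ∀ s < t, X s ω ≠ n := by
  by_cases h : ∃ t, X t ω = n
  · rw [hitTime_eq_find h, Nat.cast_inj, Nat.find_eq_iff]
  · simp only [hitTime_eq_top h, ENNReal.top_ne_natCast, false_iff, not_and]
    exact fun hX _ => h ⟨t, hX⟩

lemma exists_hitTime_eq_of_ne_top (h : hitTime X n ω ≠ ⊤) : ∃ t : ℕ, hitTime X n ω = t := by
  by_contra! hne
  exact h (hitTime_eq_top fun hex => hne _ (hitTime_eq_find hex))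

lemma hitTime_congr (hagree : ∀ s ≤ t, X s ω = X s ω') (hle : hitTime X n ω ≤ t) :
    hitTime X n ω' = hitTime X n ω := by
  obtain ⟨r, hr⟩ := exists_hitTime_eq_of_ne_top (ne_top_of_le_ne_top (by simp) hle)
  have hrt : r ≤ t := by exact_mod_cast hr ▸ hle
  obtain ⟨hXr, hfirst⟩ := hitTime_eq_iff.mp hr
  rw [hr, hitTime_eq_iff, ← hagree r hrt]
  exact ⟨hXr, fun s hs => hagree s (by omega) ▸ hfirst s hs⟩

lemma measurable_hitTime [MeasurableSpace Ω] (hX : ∀ t, Measurable (X t)) (n : ℕ) :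
    Measurable (hitTime X n) := by
  have : hitTime X n = fun ω => ⨅ t : ℕ, if X t ω = n then (t : ℝ≥0∞) else ⊤ := by
    ext ω
    simp only [hitTime, sInf_image, ← iInf_eq_if]
    rfl
  rw [this]
  exact .iInf fun t => .ite ((hX t) (measurableSet_singleton n)) measurable_const measurable_const

end HittingTimes

def UpSkipFreeUpTo (X : ℕ → Ω → ℕ) (t : ℕ) (ω : Ω) : Prop :=
  X 0 ω = 0 ∧ ∀ s < t, X (s + 1) ω ≤ X s ω + 1

def avoidSet (X : ℕ → Ω → ℕ) (c t L : ℕ) : Set Ω := {ω | ∀ s, t < s → s ≤ t + L → X s ω ≠ c}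

lemma avoidSet_zero (c t : ℕ) : avoidSet X c t 0 = Set.univ :=
  Set.eq_univ_of_forall fun _ s hts hst => absurd hts (by omega)

lemma avoidSet_succ (c t L : ℕ) :
    avoidSet X c t (L + 1) = {ω | X (t + 1) ω ≠ c} ∩ avoidSet X c (t + 1) L := by
  ext ω
  simp only [avoidSet, Set.mem_ofPred_eq, Set.mem_inter_iff]
  refine ⟨fun h => ⟨h _ (by omega) (by omega), fun s h1 h2 => h s (by omega) (by omega)⟩,
    fun ⟨h1, h2⟩ s hts hsL => ?_⟩
  rcases Nat.lt_or_ge (t + 1) s with h | h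
  · exact h2 s h (by omega)
  · exact (show s = t + 1 by omega) ▸ h1

section SkipFree

lemma UpSkipFreeUpTo.exists_eq (hω : UpSkipFreeUpTo X t ω) (hs : s ≤ t) (ha : a ≤ X s ω) :
    ∃ r ≤ s, X r ω = a := by
  induction s generalizing a with
  | zero => exact ⟨0, le_rfl, by rw [hω.1] at ha ⊢; omega⟩
  | succ s ih =>
    by_cases h : a ≤ X s ω
    · obtain ⟨r, hr, hXr⟩ := ih (by omega) h
      exact ⟨r, by omega, hXr⟩
    · exact ⟨s + 1, le_rfl, by have := hω.2 s (by omega); omega⟩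

lemma UpSkipFreeUpTo.hitTime_le (hω : UpSkipFreeUpTo X t ω) (hs : s ≤ t) (ha : a ≤ X s ω) :
    hitTime X a ω ≤ s :=
  hitTime_le_iff.mpr (hω.exists_eq hs ha)

lemma UpSkipFreeUpTo.le_self (hω : UpSkipFreeUpTo X t ω) (hs : s ≤ t) : X s ω ≤ s := by
  induction s with
  | zero => exact hω.1.le
  | succ s ih => have := hω.2 s (by omega); have := ih (by omega); omega

lemma UpSkipFreeUpTo.hitTime_congr (hω : UpSkipFreeUpTo X t ω) (hb : hitTime X b ω = t)
    (hab : a ≤ b) (hagree : ∀ s ≤ t, X s ω = X s ω') : hitTime X a ω' = hitTime X a ω :=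
  QuenchedWalk.hitTime_congr hagree
    (hω.hitTime_le le_rfl ((hitTime_eq_iff.mp hb).1 ▸ hab))

/-- Below level `b`, the walk cannot reach `c > b` before it first reaches `b`. -/
lemma UpSkipFreeUpTo.lt_hitTime_iff (hω : UpSkipFreeUpTo X t ω) (hb : hitTime X b ω = t)
    (hbc : b < c) (L : ℕ) : (t : ℝ≥0∞) + L < hitTime X c ω ↔ ω ∈ avoidSet X c t L := by
  obtain ⟨hXt, hfirst⟩ := hitTime_eq_iff.mp hb
  rw [← not_le, ← Nat.cast_add, hitTime_le_iff]
  refine ⟨fun h s hts hsL hXs => h ⟨s, hsL, hXs⟩, fun h ⟨s, hsL, hXs⟩ => ?_⟩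
  by_cases hst : s ≤ t
  · obtain ⟨r, hrs, hXr⟩ := hω.exists_eq hst (hXs ▸ hbc.le)
    have hrs' : r < s := lt_of_le_of_ne hrs fun h => by subst h; omega
    exact hfirst r (by omega) hXr
  · exact h s (by omega) hsL hXs

lemma natCast_le_hitTime (hω : ∀ t, UpSkipFreeUpTo X t ω) (n : ℕ) :
    (n : ℝ≥0∞) ≤ hitTime X n ω := by
  by_cases h : hitTime X n ω = ⊤
  · simp [h]
  obtain ⟨t, ht⟩ := exists_hitTime_eq_of_ne_top h
  rw [ht, Nat.cast_le, ← (hitTime_eq_iff.mp ht).1]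
  exact (hω t).le_self le_rfl

lemma hitTime_mono (hω : ∀ t, UpSkipFreeUpTo X t ω) (hab : a ≤ b) :
    hitTime X a ω ≤ hitTime X b ω := by
  by_cases h : hitTime X b ω = ⊤
  · simp [h]
  obtain ⟨t, ht⟩ := exists_hitTime_eq_of_ne_top h
  rw [ht]
  exact (hω t).hitTime_le le_rfl ((hitTime_eq_iff.mp ht).1 ▸ hab)

lemma frequently_sInf_le_of_frequently_hitTime_le (hω : ∀ t, UpSkipFreeUpTo X t ω)
    {g : ℝ → ℝ} (hg0 : ∀ x, 0 ≤ g x) {ε : ℝ} (hε : 0 < ε)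
    (hfreq : ∃ᶠ n : ℕ in atTop, hitTime X n ω ≤ ENNReal.ofReal ((1 + ε) * g n)) :
    ∃ᶠ t : ℕ in atTop, sInf {m : ℕ | (1 - ε) * t ≤ g m} ≤ X t ω := by
  refine frequently_atTop.mpr fun t₀ => ?_
  obtain ⟨n, hn, hτ⟩ := frequently_atTop.mp hfreq t₀
  obtain ⟨t, ht⟩ := exists_hitTime_eq_of_ne_top (ne_top_of_le_ne_top ENNReal.ofReal_ne_top hτ)
  have hnt : n ≤ t := by exact_mod_cast ht ▸ natCast_le_hitTime hω n
  have htg : (t : ℝ) ≤ (1 + ε) * g n := by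
    rw [ht, ← ENNReal.ofReal_natCast, ENNReal.ofReal_le_ofReal_iff (by nlinarith [hg0 n])] at hτ
    exact hτ
  have hmem : (1 - ε) * t ≤ g n := by
    rcases le_or_gt ε 1 with h | h
    · nlinarith [mul_le_mul_of_nonneg_left htg (by linarith : (0 : ℝ) ≤ 1 - ε),
        mul_nonneg (sq_nonneg ε) (hg0 n)]
    · nlinarith [hg0 n, (Nat.cast_nonneg t : (0 : ℝ) ≤ t)]
  exact ⟨t, hn.trans hnt, (Nat.sInf_le hmem).trans (hitTime_eq_iff.mp ht).1.ge⟩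

end SkipFree

def DeterminedUpTo (X : ℕ → Ω → ℕ) (t : ℕ) (D : Set Ω) : Prop :=
  ∀ ⦃ω ω'⦄, (∀ s ≤ t, X s ω = X s ω') → ω ∈ D → ω' ∈ D

def pathUpTo (X : ℕ → Ω → ℕ) (t : ℕ) (ω : Ω) : Fin (t + 1) → ℕ := fun i => X i ω

section Determined

variable {D D' : Set Ω}

lemma pathUpTo_eq_iff : pathUpTo X t ω = pathUpTo X t ω' ↔ ∀ s ≤ t, X s ω = X s ω' := by
  simp only [funext_iff, pathUpTo, Fin.forall_iff, Nat.lt_succ_iff]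

lemma DeterminedUpTo.preimage_image (hD : DeterminedUpTo X t D) :
    pathUpTo X t ⁻¹' (pathUpTo X t '' D) = D :=
  subset_antisymm (fun _ ⟨_, hω, heq⟩ => hD (pathUpTo_eq_iff.mp heq) hω)
    (Set.subset_preimage_image _ _)

lemma DeterminedUpTo.mono (hD : DeterminedUpTo X t D) (hts : t ≤ s) : DeterminedUpTo X s D :=
  fun _ _ h => hD fun r hr => h r (hr.trans hts)

lemma DeterminedUpTo.inter (hD : DeterminedUpTo X t D) (hD' : DeterminedUpTo X t D') :
    DeterminedUpTo X t (D ∩ D') :=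
  fun _ _ h hω => ⟨hD h hω.1, hD' h hω.2⟩

lemma determinedUpTo_setOf (hst : s ≤ t) (P : ℕ → Prop) : DeterminedUpTo X t {ω | P (X s ω)} :=
  fun _ _ h hω => by simpa only [Set.mem_ofPred_eq, h s hst] using hω

lemma determinedUpTo_hitTime_eq (n t : ℕ) : DeterminedUpTo X t {ω | hitTime X n ω = t} :=
  fun _ _ h hω => (hitTime_congr h hω.le).trans hω

lemma determinedUpTo_upSkipFreeUpTo (t : ℕ) : DeterminedUpTo X t {ω | UpSkipFreeUpTo X t ω} :=
  fun _ _ h ⟨h0, hstep⟩ => ⟨h 0 (Nat.zero_le t) ▸ h0,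
    fun s hs => h s hs.le ▸ h (s + 1) hs ▸ hstep s hs⟩

lemma determinedUpTo_avoidSet (c t L : ℕ) : DeterminedUpTo X (t + L) (avoidSet X c t L) :=
  fun _ _ h hω s hts hsL => h s hsL ▸ hω s hts hsL

variable [MeasurableSpace Ω]

lemma measurable_pathUpTo (hX : ∀ t, Measurable (X t)) (t : ℕ) : Measurable (pathUpTo X t) :=
  measurable_pi_lambda _ fun i => hX i

lemma DeterminedUpTo.measurableSet (hX : ∀ t, Measurable (X t)) (hD : DeterminedUpTo X t D) :
    MeasurableSet D :=
  hD.preimage_image ▸ measurable_pathUpTo hX t (Set.to_countable _).measurableSet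

variable {p : ℕ → ℝ} {μ : Measure Ω}

lemma measure_pathUpTo_eq_inter_eq (hw : IsQuenchedWalk μ X p) (v : Fin (t + 1) → ℕ) (m : ℕ) :
    μ (pathUpTo X t ⁻¹' {v} ∩ {ω | X (t + 1) ω = m})
      = ENNReal.ofReal (step p (v (Fin.last t)) m) * μ (pathUpTo X t ⁻¹' {v}) := by
  let x : ℕ → ℕ := fun s => if h : s ≤ t then v ⟨s, Nat.lt_succ_of_le h⟩ else 0
  have hcyl : pathUpTo X t ⁻¹' {v} = {ω | ∀ s ≤ t, X s ω = x s} := by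
    ext ω
    simp only [Set.mem_preimage, Set.mem_singleton_iff, funext_iff, pathUpTo, Fin.forall_iff,
      Nat.lt_succ_iff]
    exact forall₂_congr fun s hs => by simp only [x, dif_pos hs]
  have hxt : x t = v (Fin.last t) := dif_pos le_rfl
  rw [hcyl, Set.inter_comm, ← hxt, ← hw.2.2 t x m]
  rfl

lemma DeterminedUpTo.measure_inter_eq (hw : IsQuenchedWalk μ X p) (hD : DeterminedUpTo X t D)
    (hb : ∀ ω ∈ D, X t ω = b) (m : ℕ) :
    μ (D ∩ {ω | X (t + 1) ω = m}) = ENNReal.ofReal (step p b m) * μ D := by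
  set V := pathUpTo X t '' D
  have hV : V.Countable := Set.to_countable V
  have hmeas : ∀ v ∈ V, MeasurableSet (pathUpTo X t ⁻¹' {v}) := fun v _ =>
    measurable_pathUpTo hw.1 t (measurableSet_singleton v)
  have hlast : ∀ v ∈ V, v (Fin.last t) = b := by
    rintro _ ⟨ω, hω, rfl⟩
    exact hb ω hω
  have hdisj : V.PairwiseDisjoint fun v => pathUpTo X t ⁻¹' {v} ∩ {ω | X (t + 1) ω = m} :=
    fun v _ w _ hvw => Set.disjoint_left.mpr fun _ h1 h2 => hvw (h1.1.symm.trans h2.1)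
  calc μ (D ∩ {ω | X (t + 1) ω = m})
      = μ (⋃ v ∈ V, pathUpTo X t ⁻¹' {v} ∩ {ω | X (t + 1) ω = m}) := by
        rw [← Set.iUnion₂_inter, ← Set.preimage_iUnion₂, Set.biUnion_of_singleton,
          hD.preimage_image]
    _ = ∑' v : V, ENNReal.ofReal (step p b m) * μ (pathUpTo X t ⁻¹' {v.1}) := by
        rw [measure_biUnion hV hdisj fun v hv => (hmeas v hv).inter ((hw.1 _) (measurableSet_singleton m))]
        exact tsum_congr fun v => by rw [measure_pathUpTo_eq_inter_eq hw, hlast v v.2]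
    _ = ENNReal.ofReal (step p b m) * μ D := by
        rw [ENNReal.tsum_mul_left, tsum_measure_preimage_singleton hV hmeas, hD.preimage_image]

lemma step_eq_zero_of_lt {j m : ℕ} (h : j + 1 < m) : step p j m = 0 := by
  unfold step
  split_ifs <;> first | rfl | omega

lemma ae_upSkipFreeUpTo (hw : IsQuenchedWalk μ X p) : ∀ᵐ ω ∂μ, ∀ t, UpSkipFreeUpTo X t ω := by
  have hjump : ∀ s, ∀ᵐ ω ∂μ, X (s + 1) ω ≤ X s ω + 1 := by
    intro s
    have hnull : ∀ j m, j + 1 < m → μ ({ω | X s ω = j} ∩ {ω | X (s + 1) ω = m}) = 0 :=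
      fun j m hjm => by
        rw [(determinedUpTo_setOf le_rfl (· = j)).measure_inter_eq hw (fun _ h => h),
          step_eq_zero_of_lt hjm, ENNReal.ofReal_zero, zero_mul]
    refine measure_mono_null (fun ω hω => ?_) (measure_iUnion_null fun j =>
      measure_iUnion_null fun m => measure_iUnion_null (hnull j m))
    simp only [Set.mem_iUnion]
    exact ⟨X s ω, X (s + 1) ω, by simpa using hω, rfl, rfl⟩
  filter_upwards [hw.2.1, ae_all_iff.mpr hjump] with ω h0 hstep t
  exact ⟨h0, fun s _ => hstep s⟩

/-- The probability that the walk started at `b` avoids `c` during its first `L` steps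
(backward equation). -/
def avoidProb (p : ℕ → ℝ) (c : ℕ) : ℕ → ℕ → ℝ≥0∞
  | 0, _ => 1
  | L + 1, b => ∑' m, if m = c then 0 else ENNReal.ofReal (step p b m) * avoidProb p c L m

lemma DeterminedUpTo.measure_inter_avoidSet (hw : IsQuenchedWalk μ X p)
    (hD : DeterminedUpTo X t D) (hb : ∀ ω ∈ D, X t ω = b) (L : ℕ) :
    μ (D ∩ avoidSet X c t L) = avoidProb p c L b * μ D := by
  induction L generalizing t D b with
  | zero => rw [avoidSet_zero, Set.inter_univ, avoidProb, one_mul]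
  | succ L ih =>
    set E := D ∩ {ω | X (t + 1) ω ≠ c}
    set Em := fun m => E ∩ {ω | X (t + 1) ω = m}
    have hEm : ∀ m, DeterminedUpTo X (t + 1) (Em m) := fun m =>
      ((hD.mono t.le_succ).inter (determinedUpTo_setOf le_rfl (· ≠ c))).inter
        (determinedUpTo_setOf le_rfl (· = m))
    have hμEm : ∀ m, μ (Em m) = if m = c then 0 else ENNReal.ofReal (step p b m) * μ D := by
      intro m
      split_ifs with hmc
      · refine measure_mono_null (fun ω hω => hω.1.2 (hω.2.trans hmc)) measure_empty
      · rw [← hD.measure_inter_eq hw hb m]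
        congr 1
        ext ω
        simp only [Em, E, Set.mem_inter_iff, Set.mem_ofPred_eq]
        exact ⟨fun h => ⟨h.1.1, h.2⟩, fun h => ⟨⟨h.1, h.2 ▸ hmc⟩, h.2⟩⟩
    have hunion : D ∩ avoidSet X c t (L + 1) = ⋃ m, Em m ∩ avoidSet X c (t + 1) L := by
      rw [avoidSet_succ, ← Set.inter_assoc, ← Set.iUnion_inter]
      congr 1
      ext ω
      simp [Em, E]
    have hdisj : Pairwise (Function.onFun Disjoint fun m => Em m ∩ avoidSet X c (t + 1) L) :=
      fun m m' hm => Set.disjoint_left.mpr fun ω h h' => hm (h.1.2.symm.trans h'.1.2)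
    rw [hunion, measure_iUnion hdisj fun m =>
      ((hEm m).mono (by omega)).inter (determinedUpTo_avoidSet c (t + 1) L) |>.measurableSet hw.1]
    rw [avoidProb, ← ENNReal.tsum_mul_right]
    refine tsum_congr fun m => ?_
    rw [ih (hEm m) fun ω hω => hω.2, hμEm]
    split_ifs <;> ring

/-- Strong Markov property at `τ_b`. Intersecting with the full-measure event
`UpSkipFreeUpTo X t` is what lets events about hitting times of lower levels be decided by time
`τ_b = t`. -/
theorem measure_inter_hitTime_add_lt (hw : IsQuenchedWalk μ X p) (hbc : b < c) (L : ℕ)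
    {A : Set Ω}
    (hA : ∀ t, DeterminedUpTo X t (A ∩ {ω | hitTime X b ω = t} ∩ {ω | UpSkipFreeUpTo X t ω})) :
    μ (A ∩ {ω | hitTime X b ω + L < hitTime X c ω})
      = avoidProb p c L b * μ (A ∩ {ω | hitTime X b ω ≠ ⊤}) := by
  set Z := fun t : ℕ => A ∩ {ω | hitTime X b ω = t} ∩ {ω | UpSkipFreeUpTo X t ω}
  have hZb : ∀ t, ∀ ω ∈ Z t, X t ω = b := fun t ω hω => (hitTime_eq_iff.mp hω.1.2).1
  have hZdisj : Pairwise (Function.onFun Disjoint Z) := fun t t' htt' =>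
    Set.disjoint_left.mpr fun ω h h' => htt' (by exact_mod_cast h.1.2.symm.trans h'.1.2)
  have hpieces : ∀ᵐ ω ∂μ, ∀ t : ℕ, ω ∈ A ∩ {ω | hitTime X b ω = t} → ω ∈ Z t :=
    (ae_upSkipFreeUpTo hw).mono fun ω hω t h => ⟨h, hω t⟩
  have havoid : (A ∩ {ω | hitTime X b ω + L < hitTime X c ω} : Set Ω)
      =ᵐ[μ] ⋃ t, Z t ∩ avoidSet X c t L := by
    refine eventuallyEq_set.mpr (hpieces.mono fun ω hω => ?_)
    simp only [Set.mem_iUnion, Set.mem_inter_iff, Set.mem_ofPred_eq]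
    constructor
    · rintro ⟨hωA, hlt⟩
      obtain ⟨t, ht⟩ := exists_hitTime_eq_of_ne_top (ne_top_of_lt (le_self_add.trans_lt hlt))
      have hZ := hω t ⟨hωA, ht⟩
      exact ⟨t, hZ, (hZ.2.lt_hitTime_iff ht hbc L).mp (ht ▸ hlt)⟩
    · rintro ⟨t, hZ, havoid⟩
      exact ⟨hZ.1.1, hZ.1.2 ▸ (hZ.2.lt_hitTime_iff hZ.1.2 hbc L).mpr havoid⟩
  have hfinite : (A ∩ {ω | hitTime X b ω ≠ ⊤} : Set Ω) =ᵐ[μ] ⋃ t, Z t := by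
    refine eventuallyEq_set.mpr (hpieces.mono fun ω hω => ?_)
    simp only [Set.mem_iUnion, Set.mem_inter_iff, Set.mem_ofPred_eq]
    constructor
    · rintro ⟨hωA, hfin⟩
      obtain ⟨t, ht⟩ := exists_hitTime_eq_of_ne_top hfin
      exact ⟨t, hω t ⟨hωA, ht⟩⟩
    · rintro ⟨t, hZ⟩
      exact ⟨hZ.1.1, hZ.1.2 ▸ ENNReal.natCast_ne_top t⟩
  rw [measure_congr havoid, measure_congr hfinite,
    measure_iUnion (fun t t' h => (hZdisj h).mono Set.inter_subset_left Set.inter_subset_left)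
      fun t => ((hA t).mono (by omega)).inter (determinedUpTo_avoidSet c t L) |>.measurableSet hw.1,
    measure_iUnion hZdisj fun t => (hA t).measurableSet hw.1,
    ← ENNReal.tsum_mul_left]
  exact tsum_congr fun t => (hA t).measure_inter_avoidSet hw (hZb t) L

lemma natCast_mul_avoidProb_le [IsProbabilityMeasure μ] (hw : IsQuenchedWalk μ X p)
    (hbc : b < c) (hb : ∫⁻ ω, hitTime X b ω ∂μ ≠ ⊤) (L : ℕ) :
    (L : ℝ≥0∞) * avoidProb p c L b ≤ ∫⁻ ω, hitTime X c ω ∂μ := by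
  have hdet : ∀ t, DeterminedUpTo X t
      (Set.univ ∩ {ω | hitTime X b ω = t} ∩ {ω | UpSkipFreeUpTo X t ω}) := fun t => by
    rw [Set.univ_inter]
    exact (determinedUpTo_hitTime_eq b t).inter (determinedUpTo_upSkipFreeUpTo t)
  have hfin : μ (Set.univ ∩ {ω | hitTime X b ω ≠ ⊤}) = 1 := by
    rw [Set.univ_inter, ← measure_univ (μ := μ)]
    exact measure_congr (ae_eq_univ.mpr
      (ae_iff.mp ((ae_lt_top (measurable_hitTime hw.1 b) hb).mono fun _ => ne_of_lt)))
  have hsub : Set.univ ∩ {ω | hitTime X b ω + L < hitTime X c ω}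
      ⊆ {ω | (L : ℝ≥0∞) ≤ hitTime X c ω} := fun _ hω => by
    simpa only [Set.mem_ofPred_eq] using le_add_self.trans hω.2.le
  calc (L : ℝ≥0∞) * avoidProb p c L b
      = L * μ (Set.univ ∩ {ω | hitTime X b ω + L < hitTime X c ω}) := by
        rw [measure_inter_hitTime_add_lt hw hbc L hdet, hfin, mul_one]
    _ ≤ L * μ {ω | (L : ℝ≥0∞) ≤ hitTime X c ω} :=
        mul_le_mul_right (measure_mono hsub) _
    _ ≤ ∫⁻ ω, hitTime X c ω ∂μ :=
        mul_meas_ge_le_lintegral₀ (measurable_hitTime hw.1 c).aemeasurable _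

end Determined

lemma measure_eventually_mem_eq_zero {α : Type*} [MeasurableSpace α] {μ : Measure α}
    [IsFiniteMeasure μ] {F : ℕ → Set α} {ρ : ℝ≥0∞} (hρ : ρ < 1)
    (hF : ∀ k m, μ ((⋂ j < m, F (k + j)) ∩ F (k + m)) ≤ ρ * μ (⋂ j < m, F (k + j))) :
    μ {x | ∀ᶠ n in atTop, x ∈ F n} = 0 := by
  have hchain : ∀ k m, μ (⋂ j < m, F (k + j)) ≤ ρ ^ m * μ Set.univ := by
    intro k m
    induction m with
    | zero => simp
    | succ m ih =>
      calc μ (⋂ j < m + 1, F (k + j)) ≤ ρ * μ (⋂ j < m, F (k + j)) := by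
            rw [Set.biInter_lt_succ]; exact hF k m
        _ ≤ ρ * (ρ ^ m * μ Set.univ) := by gcongr
        _ = ρ ^ (m + 1) * μ Set.univ := by rw [pow_succ', mul_assoc]
  have hlim : Tendsto (fun m => ρ ^ m * μ Set.univ) atTop (nhds 0) := by
    simpa using ENNReal.Tendsto.mul_const (ENNReal.tendsto_pow_atTop_nhds_zero_of_lt_one hρ)
      (Or.inr (measure_ne_top μ Set.univ))
  refine measure_mono_null (fun x hx => ?_) (measure_iUnion_null fun k =>
    le_antisymm (ge_of_tendsto' hlim fun m =>
      (measure_mono fun x hx => Set.mem_iInter₂.mpr fun j _ => Set.mem_iInter.mp hx j).trans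
        (hchain k m)) bot_le)
  obtain ⟨k, hk⟩ := eventually_atTop.mp hx
  exact Set.mem_iUnion.mpr ⟨k, Set.mem_iInter.mpr fun j => hk (k + j) (by omega)⟩

section Environment

variable [MeasurableSpace Ω] {p : ℕ → ℝ} {μ : Measure Ω}

lemma ae_frequently_hitTime_le_add [IsFiniteMeasure μ] (hw : IsQuenchedWalk μ X p) {a L : ℕ → ℕ} (ha : StrictMono a)
    {ρ : ℝ≥0∞} (hρ : ρ < 1)
    (hq : ∀ k, avoidProb p (a (k + 1)) (L k) (a k) ≤ ρ) :
    ∀ᵐ ω ∂μ, ∃ᶠ k in atTop, hitTime X (a (k + 1)) ω ≤ hitTime X (a k) ω + L k := by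
  set F := fun k => {ω | hitTime X (a k) ω + L k < hitTime X (a (k + 1)) ω}
  have hF : ∀ k m, μ ((⋂ j < m, F (k + j)) ∩ F (k + m)) ≤ ρ * μ (⋂ j < m, F (k + j)) := by
    intro k m
    have hdet : ∀ t, DeterminedUpTo X t ((⋂ j < m, F (k + j)) ∩ {ω | hitTime X (a (k + m)) ω = t}
        ∩ {ω | UpSkipFreeUpTo X t ω}) := by
      rintro t ω ω' hagree ⟨⟨hωF, hτ⟩, hω⟩
      have hlevel : ∀ n ≤ a (k + m), hitTime X n ω' = hitTime X n ω :=
        fun n hn => hω.hitTime_congr hτ hn hagree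
      refine ⟨⟨?_, (hlevel _ le_rfl).trans hτ⟩, determinedUpTo_upSkipFreeUpTo t hagree hω⟩
      simp only [F, Set.mem_iInter, Set.mem_ofPred_eq] at hωF ⊢
      intro j hj
      rw [hlevel _ (ha.monotone (by omega)), hlevel _ (ha.monotone (by omega))]
      exact hωF j hj
    calc μ ((⋂ j < m, F (k + j)) ∩ F (k + m))
        = avoidProb p (a (k + m + 1)) (L (k + m)) (a (k + m))
            * μ ((⋂ j < m, F (k + j)) ∩ {ω | hitTime X (a (k + m)) ω ≠ ⊤}) :=
          measure_inter_hitTime_add_lt hw (ha (Nat.lt_succ_self _)) _ hdet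
      _ ≤ ρ * μ (⋂ j < m, F (k + j)) :=
          mul_le_mul' (hq _) (measure_mono Set.inter_subset_left)
  have hnull := measure_eventually_mem_eq_zero hρ hF
  refine ae_iff.mpr (measure_mono_null (fun ω hω => ?_) hnull)
  simpa only [F, Set.mem_ofPred_eq, not_frequently, not_le] using hω

lemma lintegral_hitTime_mono (hw : IsQuenchedWalk μ X p) (hab : a ≤ b) :
    ∫⁻ ω, hitTime X a ω ∂μ ≤ ∫⁻ ω, hitTime X b ω ∂μ :=
  lintegral_mono_ae ((ae_upSkipFreeUpTo hw).mono fun _ hω => hitTime_mono hω hab)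

variable [IsProbabilityMeasure μ]

lemma natCast_le_lintegral_hitTime (hw : IsQuenchedWalk μ X p) (n : ℕ) :
    (n : ℝ≥0∞) ≤ ∫⁻ ω, hitTime X n ω ∂μ := by
  simpa using lintegral_mono_ae (μ := μ) (f := fun _ => (n : ℝ≥0∞))
    ((ae_upSkipFreeUpTo hw).mono fun _ hω => natCast_le_hitTime hω n)

lemma avoidProb_natCeil_le (hw : IsQuenchedWalk μ X p) (hbc : b < c)
    (hb : ∫⁻ ω, hitTime X b ω ∂μ ≠ ⊤) {G δ : ℝ} (hc : ∫⁻ ω, hitTime X c ω ∂μ ≤ ENNReal.ofReal G)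
    (hG : 0 < G) (hδ : 0 ≤ δ) :
    avoidProb p c ⌈(1 + δ) * G⌉₊ b ≤ ENNReal.ofReal (1 + δ)⁻¹ := by
  set L := ⌈(1 + δ) * G⌉₊
  have hGL : (1 + δ) * G ≤ L := Nat.le_ceil _
  have hL : (0 : ℝ) < L := by nlinarith
  calc avoidProb p c L b ≤ ENNReal.ofReal G / L := by
        rw [ENNReal.le_div_iff_mul_le (Or.inl (by exact_mod_cast hL.ne')) (Or.inl (by simp)),
          mul_comm]
        exact (natCast_mul_avoidProb_le hw hbc hb L).trans hc
    _ = ENNReal.ofReal (G / L) := by rw [ENNReal.ofReal_div_of_pos hL, ENNReal.ofReal_natCast]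
    _ ≤ ENNReal.ofReal (1 + δ)⁻¹ := by
        refine ENNReal.ofReal_le_ofReal ?_
        rw [div_le_iff₀ hL]
        calc G = (1 + δ)⁻¹ * ((1 + δ) * G) := by field_simp
          _ ≤ (1 + δ)⁻¹ * L := by gcongr

theorem ae_frequently_sInf_le (hw : IsQuenchedWalk μ X p) {g h : ℝ → ℝ} (hg0 : ∀ x, 0 ≤ g x)
    (hh0 : ∀ x, 0 ≤ h x) (hgmono : Monotone g)
    (hTh : ∀ᶠ n : ℕ in atTop, ∫⁻ ω, hitTime X n ω ∂μ ≤ ENNReal.ofReal (h n))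
    (hTg : ∃ᶠ n : ℕ in atTop, ∫⁻ ω, hitTime X n ω ∂μ ≤ ENNReal.ofReal (g n))
    (hsum : Summable (fun n : ℕ => h n / g ((n : ℝ) ^ ((3 : ℝ) / 2)))) {ε : ℝ} (hε : 0 < ε) :
    ∀ᵐ ω ∂μ, ∃ᶠ t : ℕ in atTop, sInf {m : ℕ | (1 - ε) * t ≤ g m} ≤ X t ω := by
  obtain ⟨N, hN⟩ := eventually_atTop.mp hTh
  have hTfin : ∀ n, ∫⁻ ω, hitTime X n ω ∂μ ≠ ⊤ := fun n => ne_top_of_le_ne_top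
    ENNReal.ofReal_ne_top ((lintegral_hitTime_mono hw (le_max_left n N)).trans (hN _ (by simp)))
  obtain ⟨a, ha, ha0, haT, ha_growth⟩ := exists_strictMono_forall_of_frequently hTg
    (fun n => ⌈(n : ℝ) ^ ((3 : ℝ) / 2)⌉₊) (max N 1)
  have haN : ∀ k, max N 1 ≤ a k := fun k => ha0.trans (ha.monotone k.zero_le)
  have ha1 : ∀ k, (1 : ℝ) ≤ a k := fun k => by exact_mod_cast (le_max_right N 1).trans (haN k)
  have hag : ∀ k, (a k : ℝ) ≤ g (a k) := fun k => by
    have := (natCast_le_lintegral_hitTime hw (a k)).trans (haT k)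
    rwa [← ENNReal.ofReal_natCast, ENNReal.ofReal_le_ofReal_iff (hg0 _)] at this
  have hgpos : ∀ k, 0 < g (a k) := fun k => (zero_lt_one.trans_le (ha1 k)).trans_le (hag k)
  have hsum' : Summable fun k => h (a k) / (ε / 4 * g (a (k + 1))) :=
    summable_div_comp_of_rpow_le hh0 hgmono hsum ha.injective ha1 hgpos
      (fun k => (Nat.le_ceil _).trans (by exact_mod_cast ha_growth k)) (by positivity)
  have hearly := ae_eventually_lt_ofReal_of_summable
    (fun k => (measurable_hitTime hw.1 (a k)).aemeasurable)
    (fun k => hN _ ((le_max_left _ _).trans (haN k))) (fun k => by have := hgpos (k + 1); positivity)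
    hsum'
  have hfast := ae_frequently_hitTime_le_add hw ha
    (L := fun k => ⌈(1 + ε / 2) * g (a (k + 1))⌉₊)
    (ENNReal.ofReal_lt_one.mpr (inv_lt_one_of_one_lt₀ (by linarith)))
    (fun k => avoidProb_natCeil_le hw (ha k.lt_succ_self) (hTfin _) (haT _) (hgpos _)
      (by positivity))
  have hlarge : ∀ᶠ k in atTop, 4 ≤ ε * g (a (k + 1)) := by
    filter_upwards [eventually_ge_atTop ⌈4 / ε⌉₊] with k hk
    have h4 : 4 / ε ≤ a (k + 1) :=
      (Nat.le_ceil _).trans (by exact_mod_cast hk.trans (k.le_succ.trans (ha.id_le _)))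
    rw [div_le_iff₀ hε] at h4
    nlinarith [hag (k + 1)]
  filter_upwards [ae_upSkipFreeUpTo hw, hearly, hfast] with ω hω hωearly hωfast
  exact frequently_sInf_le_of_frequently_hitTime_le hω hg0 hε <|
    (ha.tendsto_atTop.comp (tendsto_add_atTop_nat 1)).frequently_map _ (fun _ => id)
      (frequently_le_ofReal_of_frequently_le_add hε hωfast hωearly hlarge)

end Environment

end QuenchedWalk

theorem statement11_general {E Ω : Type*} [MeasurableSpace E] [MeasurableSpace Ω]
    (P : Measure E)
    (p : ℕ → E → ℝ)
    (μ : E → Measure Ω) (hprob : ∀ e, IsProbabilityMeasure (μ e))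
    (X : ℕ → Ω → ℕ) (hwalk : ∀ e, IsQuenchedWalk (μ e) X (fun i => p i e))
    (g h : ℝ → ℝ) (hg0 : ∀ x, 0 ≤ g x) (hh0 : ∀ x, 0 ≤ h x)
    (hgmono : Monotone g)
    (hTh : ∀ᵐ e ∂P, ∀ᶠ n : ℕ in atTop,
      ∫⁻ ω, hitTime X n ω ∂(μ e) ≤ ENNReal.ofReal (h n))
    (hTg : ∀ᵐ e ∂P, ∃ᶠ n : ℕ in atTop,
      ∫⁻ ω, hitTime X n ω ∂(μ e) ≤ ENNReal.ofReal (g n))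
    (hsum : Summable (fun n : ℕ => h n / g ((n : ℝ) ^ ((3 : ℝ) / 2)))) :
    ∀ᵐ e ∂P, ∀ ε : ℝ, 0 < ε → ∀ᵐ ω ∂(μ e), ∃ᶠ t : ℕ in atTop,
      sInf {m : ℕ | (1 - ε) * t ≤ g m} ≤ X t ω := by
  filter_upwards [hTh, hTg] with e hThe hTge ε hε
  have := hprob e
  exact QuenchedWalk.ae_frequently_sInf_le (hwalk e) hg0 hh0 hgmono hThe hTge hsum hε

/-- let `g, h : [0,∞) → [0,∞)` be increasing with, for a.e. environment `e`:
(i) `T(n) ≤ h(n)` for all but finitely many `n`, and (ii) `T(n) ≤ g(n)` for infinitely many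
`n`; suppose `∑ h(n)/g(n^{3/2}) < ∞` and `g(n^{3/4})/g(n) → 0`. Then for a.e. environment,
for any `ε > 0`, almost surely under the quenched law, `X_t ≥ g⁻¹((1-ε) t)` for infinitely
many `t`, where `g⁻¹(y) = inf{m : g(m) ≥ y}` is the generalized inverse. -/
theorem statement11 {E Ω : Type*} [MeasurableSpace E] [MeasurableSpace Ω]
    (P : Measure E) [IsProbabilityMeasure P]
    (p : ℕ → E → ℝ) (hp : ∀ i e, p i e ∈ Set.Ioo (0 : ℝ) 1)
    (μ : E → Measure Ω) (hprob : ∀ e, IsProbabilityMeasure (μ e))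
    (X : ℕ → Ω → ℕ) (hwalk : ∀ e, IsQuenchedWalk (μ e) X (fun i => p i e))
    (g h : ℝ → ℝ) (hg0 : ∀ x, 0 ≤ g x) (hh0 : ∀ x, 0 ≤ h x)
    (hgmono : Monotone g) (hhmono : Monotone h)
    (hTh : ∀ᵐ e ∂P, ∀ᶠ n : ℕ in atTop,
      ∫⁻ ω, hitTime X n ω ∂(μ e) ≤ ENNReal.ofReal (h n))
    (hTg : ∀ᵐ e ∂P, ∃ᶠ n : ℕ in atTop,
      ∫⁻ ω, hitTime X n ω ∂(μ e) ≤ ENNReal.ofReal (g n))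
    (hsum : Summable (fun n : ℕ => h n / g ((n : ℝ) ^ ((3 : ℝ) / 2))))
    (hratio : Tendsto (fun n : ℕ => g ((n : ℝ) ^ ((3 : ℝ) / 4)) / g n) atTop (nhds 0)) :
    ∀ᵐ e ∂P, ∀ ε : ℝ, 0 < ε → ∀ᵐ ω ∂(μ e), ∃ᶠ t : ℕ in atTop,
      sInf {m : ℕ | (1 - ε) * t ≤ g m} ≤ X t ω :=
  statement11_general P p μ hprob X hwalk g h hg0 hh0 hgmono hTh hTg hsum
end
end

section
/- Suppose ζ_0, ζ_1, ... are i.i.d., symmetric, with P[ζ_0 > r] ~ c r^{-α} for α ∈ (1,2), and χ_0, χ_1, ... are independent of the ζ's, independent {0,1}-valued with P[χ_n = 1] = n^{-β} where β > 1 − 1/α. Let ρ ∈ ℝ and set log(p_n/q_n) = ρ χ_n + ζ_n (1 − χ_n). Then there exists ε > 0 such that almost surely, as n → ∞, ∑_{j=0}^n log(p_j/q_j) = ∑_{j=0}^n ζ_j + O(n^{(1/α) − ε}). -/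
/-!
The difference of the two sums is `∑_{j ≤ n} χ_j (ρ - ζ_j)`. Fix `t` with `1 - β < t < 1/α`.
A symmetric tail `P[|ζ_0| > r] = O(r^{-α})` with `α > 1` makes `ζ_0` integrable, so by
independence `E|χ_j (ρ - ζ_j)| = P[χ_j = 1] E|ρ - ζ_0| = O(j^{-β})`, and the series
`S = ∑_j |χ_j (ρ - ζ_j)| (j + 1)^{-t}` has finite expectation because `β + t > 1`; hence it
converges almost surely. As `(j + 1)^t ≤ (n + 1)^t` for `j ≤ n`, the difference is at most
`(n + 1)^t S = O(n^{1/α - ε})` with `ε = 1/α - t`. Only the first moment of `ζ_0` enters, so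
Feller's bound for `∑ ζ_j χ_j` is not needed.
-/

open MeasureTheory Filter Finset Real ProbabilityTheory
open scoped ENNReal

theorem rpow_neg_le_two_rpow_mul {β : ℝ} (hβ : 0 ≤ β) {j : ℕ} (hj : 1 ≤ j) :
    (j : ℝ) ^ (-β) ≤ 2 ^ β * ((j : ℝ) + 1) ^ (-β) := by
  have hj' : (1 : ℝ) ≤ j := by exact_mod_cast hj
  calc (j : ℝ) ^ (-β) ≤ (((j : ℝ) + 1) / 2) ^ (-β) :=
        rpow_le_rpow_of_nonpos (by positivity) (by linarith) (by linarith)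
    _ = 2 ^ β * ((j : ℝ) + 1) ^ (-β) := by
      rw [div_rpow (by positivity) zero_le_two, rpow_neg zero_le_two, div_eq_mul_inv, inv_inv,
        mul_comm]

theorem summable_nat_add_one_rpow_neg {s : ℝ} (hs : 1 < s) :
    Summable fun j : ℕ ↦ ((j : ℝ) + 1) ^ (-s) := by
  simpa using (summable_nat_add_iff 1).2 (Real.summable_nat_rpow.2 (by linarith : -s < -1))

theorem sum_le_rpow_mul_tsum {a : ℕ → ℝ} {t : ℝ} (ht : 0 ≤ t) (ha : ∀ j, 0 ≤ a j)
    (hs : Summable fun j ↦ a j * ((j : ℝ) + 1) ^ (-t)) (n : ℕ) :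
    ∑ j ∈ range (n + 1), a j ≤ ((n : ℝ) + 1) ^ t * ∑' j, a j * ((j : ℝ) + 1) ^ (-t) := calc
  ∑ j ∈ range (n + 1), a j
      = ∑ j ∈ range (n + 1), ((j : ℝ) + 1) ^ t * (a j * ((j : ℝ) + 1) ^ (-t)) := by
    refine sum_congr rfl fun j _ ↦ ?_
    rw [mul_left_comm, ← rpow_add (by positivity), add_neg_cancel, rpow_zero, mul_one]
  _ ≤ ∑ j ∈ range (n + 1), ((n : ℝ) + 1) ^ t * (a j * ((j : ℝ) + 1) ^ (-t)) := by
    refine sum_le_sum fun j hj ↦ mul_le_mul_of_nonneg_right ?_ (by have := ha j; positivity)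
    have : j ≤ n := Nat.lt_succ_iff.1 (mem_range.1 hj)
    exact rpow_le_rpow (by positivity) (by exact_mod_cast Nat.succ_le_succ this) ht
  _ ≤ ((n : ℝ) + 1) ^ t * ∑' j, a j * ((j : ℝ) + 1) ^ (-t) := by
    rw [← mul_sum]
    exact mul_le_mul_of_nonneg_left (hs.sum_le_tsum _ fun j _ ↦ by have := ha j; positivity)
      (by positivity)

section

variable {Ω : Type*} [MeasurableSpace Ω] {μ : Measure Ω}

theorem lintegral_ofReal_lt_top_of_tail_le_rpow [IsFiniteMeasure μ] {g : Ω → ℝ}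
    (hg : AEMeasurable g μ) (hg0 : 0 ≤ᵐ[μ] g) {K α : ℝ} (hα : 1 < α)
    (htail : ∀ᶠ r in atTop, μ {ω | r < g ω} ≤ ENNReal.ofReal (K * r ^ (-α))) :
    ∫⁻ ω, ENNReal.ofReal (g ω) ∂μ < ∞ := by
  obtain ⟨R, hR⟩ := (htail.and (eventually_gt_atTop 0)).exists_forall_of_atTop
  have hRpos : 0 < R := (hR R le_rfl).2
  have hnear : ∫⁻ r in Set.Ioc 0 R, μ {ω | r < g ω} < ∞ := calc
    _ ≤ ∫⁻ _ in Set.Ioc 0 R, μ Set.univ := lintegral_mono fun _ ↦ measure_mono (Set.subset_univ _)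
    _ < ∞ := by simp [ENNReal.mul_lt_top, measure_lt_top]
  have hfar : ∫⁻ r in Set.Ioi R, μ {ω | r < g ω} < ∞ := calc
    _ ≤ ∫⁻ r in Set.Ioi R, ENNReal.ofReal (K * r ^ (-α)) :=
      setLIntegral_mono' measurableSet_Ioi fun r hr ↦ (hR r (le_of_lt hr)).1
    _ < ∞ := ((integrableOn_Ioi_rpow_of_lt (by linarith) hRpos).const_mul K).lintegral_lt_top
  rw [lintegral_eq_lintegral_meas_lt μ hg0 hg, ← Set.Ioc_union_Ioi_eq_Ioi hRpos.le]
  exact (lintegral_union_le _ _ _).trans_lt (ENNReal.add_lt_top.2 ⟨hnear, hfar⟩)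

theorem eventually_measure_lt_le_rpow_of_tendsto [IsFiniteMeasure μ] {f : Ω → ℝ} {c α : ℝ}
    (htail : Tendsto (fun r : ℝ ↦ (μ {ω | r < f ω}).toReal * r ^ α) atTop (nhds c)) :
    ∀ᶠ r in atTop, μ {ω | r < f ω} ≤ ENNReal.ofReal ((c + 1) * r ^ (-α)) := by
  filter_upwards [htail.eventually_le_const (lt_add_one c), eventually_gt_atTop 0] with r hr hr0
  rw [← ENNReal.ofReal_toReal (measure_ne_top μ _)]
  refine ENNReal.ofReal_le_ofReal ?_
  rwa [rpow_neg hr0.le, ← div_eq_mul_inv, le_div_iff₀ (rpow_pos_of_pos hr0 α)]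

theorem eventually_measure_abs_lt_le_rpow [IsFiniteMeasure μ] {f : Ω → ℝ} {c α : ℝ}
    (hsym : ∀ x : ℝ, 0 ≤ x → μ {ω | f ω ≤ -x} = μ {ω | x ≤ f ω})
    (htail : Tendsto (fun r : ℝ ↦ (μ {ω | r < f ω}).toReal * r ^ α) atTop (nhds c)) :
    ∀ᶠ r in atTop, μ {ω | r < |f ω|} ≤ ENNReal.ofReal ((c + 1) * (1 + 2 ^ α) * r ^ (-α)) := by
  have hc : 0 ≤ c := ge_of_tendsto htail <| (eventually_ge_atTop 0).mono fun r hr ↦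
    mul_nonneg ENNReal.toReal_nonneg (rpow_nonneg hr α)
  have hbound := eventually_measure_lt_le_rpow_of_tendsto htail
  filter_upwards [hbound, (tendsto_id.atTop_div_const two_pos).eventually hbound,
    eventually_gt_atTop 0] with r hr hr2 hr0
  have hsplit : {ω | r < |f ω|} ⊆ {ω | r < f ω} ∪ {ω | f ω ≤ -r} := fun ω (hω : r < |f ω|) ↦ by
    rcases lt_abs.1 hω with h | h
    · exact Or.inl h
    · exact Or.inr (show f ω ≤ -r by linarith)
  have hneg : μ {ω | f ω ≤ -r} ≤ μ {ω | r / 2 < f ω} := by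
    rw [hsym r hr0.le]
    exact measure_mono fun ω (hω : r ≤ f ω) ↦ show r / 2 < f ω by linarith
  have hscale : (r / 2) ^ (-α) = 2 ^ α * r ^ (-α) := by
    rw [div_rpow hr0.le zero_le_two, rpow_neg zero_le_two, div_eq_mul_inv, inv_inv, mul_comm]
  calc μ {ω | r < |f ω|} ≤ μ {ω | r < f ω} + μ {ω | r / 2 < f ω} :=
        (measure_mono hsplit).trans ((measure_union_le _ _).trans (add_le_add_right hneg _))
    _ ≤ ENNReal.ofReal ((c + 1) * r ^ (-α)) + ENNReal.ofReal ((c + 1) * (r / 2) ^ (-α)) :=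
        add_le_add hr hr2
    _ = ENNReal.ofReal ((c + 1) * (1 + 2 ^ α) * r ^ (-α)) := by
      rw [← ENNReal.ofReal_add (by positivity) (by positivity), hscale]
      ring_nf

theorem integrable_of_symmetric_of_tendsto_tail [IsFiniteMeasure μ] {f : Ω → ℝ}
    (hf : Measurable f) {c α : ℝ} (hα : 1 < α)
    (hsym : ∀ x : ℝ, 0 ≤ x → μ {ω | f ω ≤ -x} = μ {ω | x ≤ f ω})
    (htail : Tendsto (fun r : ℝ ↦ (μ {ω | r < f ω}).toReal * r ^ α) atTop (nhds c)) :
    Integrable f μ := by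
  refine ⟨hf.aestronglyMeasurable, ?_⟩
  simp_rw [HasFiniteIntegral, enorm_eq_ofReal_abs]
  exact lintegral_ofReal_lt_top_of_tail_le_rpow hf.abs.aemeasurable
    (ae_of_all _ fun _ ↦ abs_nonneg _) hα (eventually_measure_abs_lt_le_rpow hsym htail)

theorem lintegral_enorm_mul_of_indepFun_of_bernoulli {X Y : Ω → ℝ} (hX : Measurable X)
    (hY : Measurable Y) (hX01 : ∀ ω, X ω = 0 ∨ X ω = 1) (hXY : IndepFun X Y μ) :
    ∫⁻ ω, ‖X ω * Y ω‖ₑ ∂μ = μ {ω | X ω = 1} * ∫⁻ ω, ‖Y ω‖ₑ ∂μ := by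
  have hXind : (fun ω ↦ ‖X ω‖ₑ) = {ω | X ω = 1}.indicator 1 := funext fun ω ↦ by
    rcases hX01 ω with h | h <;> simp [h]
  simp_rw [enorm_mul]
  rw [lintegral_mul_eq_lintegral_mul_lintegral_of_indepFun'' hX.enorm.aemeasurable
    hY.enorm.aemeasurable (hXY.comp measurable_enorm measurable_enorm), hXind,
    lintegral_indicator_one (measurableSet_eq_fun hX measurable_const)]

theorem ae_summable_of_tsum_lintegral_ne_top {g : ℕ → Ω → ℝ} (hg : ∀ j, Measurable (g j))
    (hg0 : ∀ j ω, 0 ≤ g j ω) (h : ∑' j, ∫⁻ ω, ENNReal.ofReal (g j ω) ∂μ ≠ ∞) :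
    ∀ᵐ ω ∂μ, Summable fun j ↦ g j ω := by
  rw [← lintegral_tsum fun j ↦ (hg j).ennreal_ofReal.aemeasurable] at h
  filter_upwards [ae_lt_top (Measurable.tsum fun j ↦ (hg j).ennreal_ofReal) h] with ω hω
  simpa [ENNReal.toReal_ofReal (hg0 _ ω)] using ENNReal.summable_toReal hω.ne

theorem ae_summable_abs_bernoulli_mul_mul_rpow [IsProbabilityMeasure μ] {ζ χ : ℕ → Ω → ℝ}
    (hζ : ∀ j, Measurable (ζ j)) (hχ : ∀ j, Measurable (χ j))
    (hident : ∀ j, IdentDistrib (ζ j) (ζ 0) μ μ) (hint : Integrable (ζ 0) μ)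
    (h01 : ∀ j ω, χ j ω = 0 ∨ χ j ω = 1) {β t : ℝ} (hβ : 0 ≤ β) (hβt : 1 < β + t)
    (hprob : ∀ j : ℕ, 1 ≤ j → (μ {ω | χ j ω = 1}).toReal = (j : ℝ) ^ (-β))
    (hindep : ∀ j, IndepFun (χ j) (ζ j) μ) (ρ : ℝ) :
    ∀ᵐ ω ∂μ, Summable fun j ↦ |χ j ω * (ρ - ζ j ω)| * ((j : ℝ) + 1) ^ (-t) := by
  set K := ∫⁻ ω, ‖ρ - ζ 0 ω‖ₑ ∂μ
  have hK : K ≠ ∞ := ((integrable_const ρ).sub hint).hasFiniteIntegral.ne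
  have hprob_le (j : ℕ) : μ {ω | χ j ω = 1} ≤ ENNReal.ofReal (2 ^ β * ((j : ℝ) + 1) ^ (-β)) := by
    rcases Nat.eq_zero_or_pos j with rfl | hj
    · simpa using prob_le_one.trans (ENNReal.one_le_ofReal.2 (one_le_rpow one_le_two hβ))
    · rw [← ENNReal.ofReal_toReal (measure_ne_top μ _), hprob j hj]
      exact ENNReal.ofReal_le_ofReal (rpow_neg_le_two_rpow_mul hβ hj)
  have hterm (j : ℕ) : ∫⁻ ω, ENNReal.ofReal (|χ j ω * (ρ - ζ j ω)| * ((j : ℝ) + 1) ^ (-t)) ∂μ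
      ≤ ENNReal.ofReal (2 ^ β * ((j : ℝ) + 1) ^ (-(β + t))) * K := by
    have hsame : ∫⁻ ω, ‖ρ - ζ j ω‖ₑ ∂μ = K :=
      ((hident j).comp (measurable_const.sub measurable_id)).comp measurable_enorm |>.lintegral_eq
    simp_rw [ENNReal.ofReal_mul (abs_nonneg _), ← enorm_eq_ofReal_abs]
    rw [lintegral_mul_const' _ _ ENNReal.ofReal_ne_top,
      lintegral_enorm_mul_of_indepFun_of_bernoulli (hχ j) ((hζ j).const_sub ρ) (h01 j)
        ((hindep j).comp measurable_id (measurable_const.sub measurable_id)), hsame,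
      neg_add, rpow_add (by positivity), ← mul_assoc, ENNReal.ofReal_mul (by positivity)]
    calc μ {ω | χ j ω = 1} * K * ENNReal.ofReal (((j : ℝ) + 1) ^ (-t))
        ≤ ENNReal.ofReal (2 ^ β * ((j : ℝ) + 1) ^ (-β)) * K *
            ENNReal.ofReal (((j : ℝ) + 1) ^ (-t)) := by
          gcongr
          exact hprob_le j
      _ = _ := by ring
  refine ae_summable_of_tsum_lintegral_ne_top (fun j ↦ by fun_prop) (fun j ω ↦ by positivity) ?_
  refine ne_top_of_le_ne_top ?_ (ENNReal.tsum_le_tsum hterm)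
  rw [ENNReal.tsum_mul_right, ← ENNReal.ofReal_tsum_of_nonneg (fun j ↦ by positivity)
    ((summable_nat_add_one_rpow_neg hβt).mul_left _)]
  exact ENNReal.mul_ne_top ENNReal.ofReal_ne_top hK

end

theorem statement15_general {E : Type*} [MeasurableSpace E] (P : Measure E) [IsProbabilityMeasure P]
    (c α β ρ : ℝ) (hα : α ∈ Set.Ioo (1 : ℝ) 2)
    (hβ : β ∈ Set.Ioo (0 : ℝ) 1) (hβα : 1 - 1 / α < β)
    (ζ χ : ℕ → E → ℝ) (hζmeas : ∀ n, Measurable (ζ n)) (hχmeas : ∀ n, Measurable (χ n))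
    (hident : ∀ n, Measure.map (ζ n) P = Measure.map (ζ 0) P)
    (hsym : ∀ x : ℝ, 0 ≤ x → P {e | ζ 0 e ≤ -x} = P {e | x ≤ ζ 0 e})
    (htail : Tendsto (fun r : ℝ => (P {e | r < ζ 0 e}).toReal * r ^ α) atTop (nhds c))
    (h01 : ∀ n e, χ n e = 0 ∨ χ n e = 1)
    (hχ : ∀ n : ℕ, 1 ≤ n → (P {e | χ n e = 1}).toReal = (n : ℝ) ^ (-β))
    (hindep : iIndepFun (Sum.elim ζ χ) P) :
    ∃ ε : ℝ, 0 < ε ∧ ∀ᵐ e ∂P, ∃ C : ℝ, ∀ᶠ n : ℕ in atTop,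
      |(∑ j ∈ Finset.range (n + 1), (ρ * χ j e + ζ j e * (1 - χ j e)))
          - ∑ j ∈ Finset.range (n + 1), ζ j e|
        ≤ C * (n : ℝ) ^ (1 / α - ε) := by
  obtain ⟨hα1, -⟩ := hα
  obtain ⟨hβ0, hβ1⟩ := hβ
  have hinvα : 0 < 1 / α := by positivity
  obtain ⟨t, ht0, hβt, htα⟩ : ∃ t, 0 ≤ t ∧ 1 < β + t ∧ t < 1 / α :=
    ⟨(1 / α + (1 - β)) / 2, by linarith, by linarith, by linarith⟩
  refine ⟨1 / α - t, by linarith, ?_⟩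
  have hint := integrable_of_symmetric_of_tendsto_tail (hζmeas 0) hα1 hsym htail
  have hident' (j : ℕ) : IdentDistrib (ζ j) (ζ 0) P P :=
    ⟨(hζmeas j).aemeasurable, (hζmeas 0).aemeasurable, hident j⟩
  have hindep' (j : ℕ) : IndepFun (χ j) (ζ j) P :=
    hindep.indepFun (i := .inr j) (j := .inl j) (by simp)
  filter_upwards [ae_summable_abs_bernoulli_mul_mul_rpow hζmeas hχmeas hident' hint h01 hβ0.le
    hβt hχ hindep' ρ] with e he
  refine ⟨2 ^ t * ∑' j, |χ j e * (ρ - ζ j e)| * ((j : ℝ) + 1) ^ (-t), ?_⟩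
  filter_upwards [eventually_ge_atTop 1] with n hn
  have hn' : (1 : ℝ) ≤ n := by exact_mod_cast hn
  rw [sub_sub_cancel, ← sum_sub_distrib]
  calc |∑ j ∈ range (n + 1), (ρ * χ j e + ζ j e * (1 - χ j e) - ζ j e)|
      = |∑ j ∈ range (n + 1), χ j e * (ρ - ζ j e)| := by
        congr 1; exact sum_congr rfl fun j _ ↦ by ring
    _ ≤ ∑ j ∈ range (n + 1), |χ j e * (ρ - ζ j e)| := abs_sum_le_sum_abs _ _
    _ ≤ ((n : ℝ) + 1) ^ t * ∑' j, |χ j e * (ρ - ζ j e)| * ((j : ℝ) + 1) ^ (-t) :=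
        sum_le_rpow_mul_tsum ht0 (fun _ ↦ abs_nonneg _) he n
    _ ≤ (2 * n) ^ t * ∑' j, |χ j e * (ρ - ζ j e)| * ((j : ℝ) + 1) ^ (-t) := by
        gcongr
        linarith
    _ = _ := by rw [mul_rpow zero_le_two (by positivity)]; ring

/-- suppose `ζ_0, ζ_1, …` are i.i.d., symmetric, with `P[ζ_0 > r] ~ c r^{-α}`
for `α ∈ (1,2)`, and `χ_0, χ_1, …` are `{0,1}`-valued with `P[χ_n = 1] = n^{-β}` (`n ≥ 1`)
where `β ∈ (0,1)` and `β > 1 − 1/α`, the whole family `(ζ_n, χ_n)` being independent. Let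
`ρ ∈ ℝ` and set `log(p_n/q_n) = ρ χ_n + ζ_n (1 − χ_n)`. Then there is `ε > 0` such that
almost surely `∑_{j=0}^n log(p_j/q_j) = ∑_{j=0}^n ζ_j + O(n^{1/α − ε})`. -/
theorem statement15 {E : Type*} [MeasurableSpace E] (P : Measure E) [IsProbabilityMeasure P]
    (c α β ρ : ℝ) (hc : 0 < c) (hα : α ∈ Set.Ioo (1 : ℝ) 2)
    (hβ : β ∈ Set.Ioo (0 : ℝ) 1) (hβα : 1 - 1 / α < β)
    (ζ χ : ℕ → E → ℝ) (hζmeas : ∀ n, Measurable (ζ n)) (hχmeas : ∀ n, Measurable (χ n))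
    (hident : ∀ n, Measure.map (ζ n) P = Measure.map (ζ 0) P)
    (hsym : ∀ x : ℝ, 0 ≤ x → P {e | ζ 0 e ≤ -x} = P {e | x ≤ ζ 0 e})
    (htail : Tendsto (fun r : ℝ => (P {e | r < ζ 0 e}).toReal * r ^ α) atTop (nhds c))
    (h01 : ∀ n e, χ n e = 0 ∨ χ n e = 1)
    (hχ : ∀ n : ℕ, 1 ≤ n → (P {e | χ n e = 1}).toReal = (n : ℝ) ^ (-β))
    (hindep : iIndepFun (Sum.elim ζ χ) P) :
    ∃ ε : ℝ, 0 < ε ∧ ∀ᵐ e ∂P, ∃ C : ℝ, ∀ᶠ n : ℕ in atTop,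
      |(∑ j ∈ Finset.range (n + 1), (ρ * χ j e + ζ j e * (1 - χ j e)))
          - ∑ j ∈ Finset.range (n + 1), ζ j e|
        ≤ C * (n : ℝ) ^ (1 / α - ε) :=
  statement15_general P c α β ρ hα hβ hβα ζ χ hζmeas hχmeas hident hsym htail h01 hχ hindep
end

section
/- Suppose ζ_0, ζ_1, ... are i.i.d. with E[(ζ_0^+)^p] < ∞ for some p > 0 and P[ζ_0 < −x] ≥ c x^{-γ} for some c > 0, γ < min(1, p) and all large x (e.g., under the two-sided regular variation condition P[ζ_0 > x] = x^{-α_+} L_+(x), P[ζ_0 < −x] = x^{-α_-} L_-(x) with 0 < α_+ < min(1, α_-)). If the environment is given by log(p_n/q_n) = ζ_n, then for almost every environment, f(n) = ∑_{i=0}^n exp(∑_{j=0}^{i-1} ζ_j) converges to a finite limit as n → ∞, and hence the random walk in this environment is transient. -/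
/-!
The walk is transient as soon as the scale function `f(n) = ∑_{i ≤ n} exp(S_i)`,
`S_i = ζ_0 + ⋯ + ζ_{i-1}`, is bounded: `f - 1` is harmonic away from `0` and vanishes at `0`,
so its expectation along the walk killed at `0` is conserved; this bounds the probability of never
returning to `0` below by `(f(1) - 1) q_0 / sup f > 0`.

Boundedness of `f` follows from `S_n ≤ -n` for all large `n` (Derman–Robbins). With
`q = min(1, p)`, the strong law for `(ζ_j^+)^q` gives `∑_{j<n} ζ_j^+ = O(n^{1/q})`, while the heavy
left tail and Borel–Cantelli over the dyadic blocks `[2^k, 2^{k+1})` give, in every late block,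
some `m` with `ζ_m < -m^α` for a fixed `α > 1/q`; a single such jump in `(n/4, n)` dominates.
-/
open MeasureTheory Filter Finset Real
open scoped ENNReal

noncomputable section

section Scale

variable {p : ℕ → ℝ}

lemma Denv_nonneg (hp0 : ∀ i, 0 ≤ p i) (hp1 : ∀ i, p i ≤ 1) (i : ℕ) : 0 ≤ Denv p i :=
  prod_nonneg fun j _ => div_nonneg (hp0 j) (sub_nonneg.2 (hp1 j))

lemma Denv_succ (i : ℕ) : Denv p (i + 1) = Denv p i * (p i / (1 - p i)) :=
  prod_range_succ _ _

lemma fenv_zero : fenv p 0 = 1 := by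
  simp [fenv, Denv]

lemma fenv_succ (n : ℕ) : fenv p (n + 1) = fenv p n + Denv p (n + 1) :=
  sum_range_succ _ _

lemma one_le_fenv (hp0 : ∀ i, 0 ≤ p i) (hp1 : ∀ i, p i ≤ 1) (n : ℕ) : 1 ≤ fenv p n := by
  induction n with
  | zero => rw [fenv_zero]
  | succ n ih => rw [fenv_succ]; linarith [Denv_nonneg hp0 hp1 (n + 1)]

lemma fenv_harmonic {j : ℕ} (hq : p (j + 1) ≠ 1) :
    p (j + 1) * fenv p j + (1 - p (j + 1)) * fenv p (j + 2) = fenv p (j + 1) := by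
  have hq' : 1 - p (j + 1) ≠ 0 := sub_ne_zero.2 hq.symm
  rw [fenv_succ (j + 1), Denv_succ (j + 1), fenv_succ j]
  field_simp
  ring

lemma Denv_logistic (a : ℕ → ℝ) (i : ℕ) :
    Denv (fun j => Real.exp (a j) / (1 + Real.exp (a j))) i = Real.exp (∑ j ∈ range i, a j) := by
  rw [Denv, Real.exp_sum]
  refine prod_congr rfl fun j _ => ?_
  have : 0 < 1 + Real.exp (a j) := by positivity
  field_simp
  ring

end Scale

lemma tsum_ofReal_mul_step_succ {p g : ℕ → ℝ} (hg : ∀ m, 0 ≤ g m) {j : ℕ}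
    (hp0 : 0 ≤ p (j + 1)) (hp1 : p (j + 1) ≤ 1) :
    ∑' m, ENNReal.ofReal (g m) * ENNReal.ofReal (step p (j + 1) m)
      = ENNReal.ofReal (p (j + 1) * g j + (1 - p (j + 1)) * g (j + 2)) := by
  have hstep : ∀ m ∉ ({j, j + 2} : Finset ℕ), step p (j + 1) m = 0 := by
    intro m hm
    simp only [mem_insert, mem_singleton, not_or] at hm
    simp [step, hm.1, hm.2]
  rw [tsum_eq_sum fun m hm => by simp [hstep m hm], sum_pair (show j ≠ j + 2 by omega)]
  have hj : step p (j + 1) j = p (j + 1) := by simp [step]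
  have hj2 : step p (j + 1) (j + 2) = 1 - p (j + 1) := by simp [step]
  rw [hj, hj2, ← ENNReal.ofReal_mul (hg j), ← ENNReal.ofReal_mul (hg (j + 2)),
    ← ENNReal.ofReal_add (mul_nonneg (hg j) hp0) (mul_nonneg (hg _) (sub_nonneg.2 hp1))]
  ring_nf

lemma tsum_ofReal_fenv_sub_one_mul_step {p : ℕ → ℝ} (hp0 : ∀ i, 0 ≤ p i) (hp1 : ∀ i, p i < 1)
    {k : ℕ} (hk : k ≠ 0) :
    ∑' m, ENNReal.ofReal (fenv p m - 1) * ENNReal.ofReal (step p k m)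
      = ENNReal.ofReal (fenv p k - 1) := by
  obtain ⟨j, rfl⟩ := Nat.exists_eq_succ_of_ne_zero hk
  rw [tsum_ofReal_mul_step_succ (fun m => sub_nonneg.2 (one_le_fenv hp0 (fun i => (hp1 i).le) m))
    (hp0 _) (hp1 _).le, ← fenv_harmonic (hp1 (j + 1)).ne]
  ring_nf

section Paths

variable {Ω : Type*} {X : ℕ → Ω → ℕ}

def path (X : ℕ → Ω → ℕ) (t : ℕ) (ω : Ω) : Fin (t + 1) → ℕ := fun s => X s ω

def AvoidsZero {t : ℕ} (x : Fin (t + 1) → ℕ) : Prop := ∀ s, s ≠ 0 → x s ≠ 0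

instance {t : ℕ} : DecidablePred (AvoidsZero (t := t)) := fun x => by
  unfold AvoidsZero; infer_instance

lemma path_succ (t : ℕ) (ω : Ω) :
    path X (t + 1) ω = Fin.snoc (path X t ω) (X (t + 1) ω) := by
  funext s
  induction s using Fin.lastCases with
  | last => simp [path]
  | cast s => simp [path]

lemma measurable_path [MeasurableSpace Ω] (hX : ∀ t, Measurable (X t)) (t : ℕ) :
    Measurable (path X t) :=
  measurable_pi_lambda _ fun s => hX s

lemma avoidsZero_snoc {t : ℕ} (x : Fin (t + 1) → ℕ) (m : ℕ) :
    AvoidsZero (Fin.snoc x m : Fin (t + 2) → ℕ) ↔ AvoidsZero x ∧ m ≠ 0 := by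
  simp only [AvoidsZero, Fin.forall_fin_succ', Fin.snoc_castSucc, Fin.snoc_last, ne_eq,
    Fin.castSucc_eq_zero_iff, Fin.last_eq_zero_iff, Nat.add_one_ne_zero, not_false_eq_true,
    forall_const]

lemma ENNReal.tsum_fin_snoc {t : ℕ} (F : (Fin (t + 2) → ℕ) → ℝ≥0∞) :
    ∑' y, F y = ∑' (x : Fin (t + 1) → ℕ) (m : ℕ), F (Fin.snoc x m) := by
  rw [← (Fin.snocEquiv fun _ => ℕ).tsum_eq F, ENNReal.tsum_prod', ENNReal.tsum_comm]
  rfl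

lemma antitone_preimage_path_avoidsZero :
    Antitone fun t => path X t ⁻¹' {x | AvoidsZero x} :=
  antitone_nat_of_succ_le fun t ω hω => by
    simp only [Set.mem_preimage, Set.mem_ofPred_eq, path_succ, avoidsZero_snoc] at hω ⊢
    exact hω.1

lemma setOf_exists_return_eq_compl :
    {ω | ∃ t, 1 ≤ t ∧ X t ω = 0} = (⋂ t, path X t ⁻¹' {x | AvoidsZero x})ᶜ := by
  ext ω
  simp only [Set.mem_ofPred_eq, AvoidsZero, ne_eq, Fin.forall_iff, Order.lt_add_one_iff,
    Fin.mk_eq_zero, Set.preimage_ofPred_eq, path, Set.compl_iInter, Set.mem_iUnion,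
    Set.mem_compl_iff, not_forall, Decidable.not_not]
  exact ⟨fun ⟨t, ht, h⟩ => ⟨t, t, le_rfl, by omega, h⟩, fun ⟨_, s, _, hs, h⟩ => ⟨s, by omega, h⟩⟩

end Paths

section Walk

variable {Ω : Type*} [MeasurableSpace Ω] {μ : Measure Ω} {X : ℕ → Ω → ℕ} {p : ℕ → ℝ}

lemma IsQuenchedWalk.measure_path_snoc (hX : IsQuenchedWalk μ X p) (t : ℕ)
    (x : Fin (t + 1) → ℕ) (m : ℕ) :
    μ (path X (t + 1) ⁻¹' {Fin.snoc x m})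
      = ENNReal.ofReal (step p (x (Fin.last t)) m) * μ (path X t ⁻¹' {x}) := by
  set x' : ℕ → ℕ := fun s => if h : s < t + 1 then x ⟨s, h⟩ else 0
  have hpath : path X t ⁻¹' {x} = {ω | ∀ s ≤ t, X s ω = x' s} := by
    ext ω
    simp +contextual [path, funext_iff, Fin.forall_iff, x']
  have hpath_succ : path X (t + 1) ⁻¹' {Fin.snoc x m}
      = {ω | X (t + 1) ω = m ∧ ∀ s ≤ t, X s ω = x' s} := by
    ext ω
    rw [Set.mem_preimage, Set.mem_singleton_iff, path_succ, Fin.snoc_inj, and_comm]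
    exact and_congr_right fun _ => Set.ext_iff.1 hpath ω
  rw [hpath_succ, hX.2.2 t x' m, hpath]
  simp [x', Fin.last]

/-- `E[f(X_t) - 1; X_s ≠ 0 for 1 ≤ s ≤ t]`, computed by summing over paths. -/
def scaleMass (μ : Measure Ω) (X : ℕ → Ω → ℕ) (p : ℕ → ℝ) (t : ℕ) : ℝ≥0∞ :=
  ∑' x : Fin (t + 1) → ℕ,
    if AvoidsZero x then ENNReal.ofReal (fenv p (x (Fin.last t)) - 1) * μ (path X t ⁻¹' {x})
    else 0

lemma IsQuenchedWalk.scaleMass_succ (hX : IsQuenchedWalk μ X p) (hp0 : ∀ i, 0 ≤ p i)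
    (hp1 : ∀ i, p i < 1) {t : ℕ} (ht : t ≠ 0) :
    scaleMass μ X p (t + 1) = scaleMass μ X p t := by
  rw [scaleMass, ENNReal.tsum_fin_snoc, scaleMass]
  refine tsum_congr fun x => ?_
  simp only [avoidsZero_snoc, Fin.snoc_last, hX.measure_path_snoc]
  by_cases hx : AvoidsZero x
  · have hk : x (Fin.last t) ≠ 0 := hx _ (by simpa [Fin.ext_iff] using ht)
    simp only [hx, true_and, if_true]
    calc ∑' m, (if m ≠ 0 then ENNReal.ofReal (fenv p m - 1)
            * (ENNReal.ofReal (step p (x (Fin.last t)) m) * μ (path X t ⁻¹' {x})) else 0)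
        = ∑' m, ENNReal.ofReal (fenv p m - 1) * ENNReal.ofReal (step p (x (Fin.last t)) m)
            * μ (path X t ⁻¹' {x}) := by
          refine tsum_congr fun m => ?_
          rcases eq_or_ne m 0 with rfl | hm
          · simp [fenv_zero]
          · simp [hm, mul_assoc]
      _ = _ := by rw [ENNReal.tsum_mul_right, tsum_ofReal_fenv_sub_one_mul_step hp0 hp1 hk]
  · simp [hx]

lemma IsQuenchedWalk.ofReal_le_scaleMass_one [IsProbabilityMeasure μ]
    (hX : IsQuenchedWalk μ X p) :
    ENNReal.ofReal (fenv p 1 - 1) * ENNReal.ofReal (1 - p 0) ≤ scaleMass μ X p 1 := by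
  have hstart : μ (path X 0 ⁻¹' {![0]}) = 1 := by
    rw [← measure_univ (μ := μ)]
    refine measure_congr (eventuallyEq_univ.2 ?_)
    filter_upwards [hX.2.1] with ω hω
    simp [path, funext_iff, hω]
  have hsnoc : (Fin.snoc ![0] 1 : Fin 2 → ℕ) = ![0, 1] := by
    funext s
    fin_cases s <;> rfl
  have hfirst : μ (path X 1 ⁻¹' {![0, 1]}) = ENNReal.ofReal (1 - p 0) := by
    rw [← hsnoc, hX.measure_path_snoc, hstart, mul_one]
    simp [step]
  have havoid : AvoidsZero ![0, 1] := by
    intro s hs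
    fin_cases s <;> simp_all
  calc ENNReal.ofReal (fenv p 1 - 1) * ENNReal.ofReal (1 - p 0)
      = if AvoidsZero ![0, 1] then
          ENNReal.ofReal (fenv p ((![0, 1] : Fin 2 → ℕ) (Fin.last 1)) - 1)
            * μ (path X 1 ⁻¹' {![0, 1]}) else 0 := by
        rw [if_pos havoid, hfirst]
        rfl
    _ ≤ scaleMass μ X p 1 := ENNReal.le_tsum _

lemma IsQuenchedWalk.scaleMass_le (hX : IsQuenchedWalk μ X p) {L : ℝ} (hL : ∀ n, fenv p n ≤ L)
    (t : ℕ) : scaleMass μ X p t ≤ ENNReal.ofReal L * μ (path X t ⁻¹' {x | AvoidsZero x}) := by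
  calc scaleMass μ X p t
      ≤ ∑' x : Fin (t + 1) → ℕ,
          ENNReal.ofReal L * {x | AvoidsZero x}.indicator (fun x => μ (path X t ⁻¹' {x})) x := by
        refine ENNReal.tsum_le_tsum fun x => ?_
        by_cases hx : AvoidsZero x
        · simp only [hx, if_true, Set.indicator_of_mem (show x ∈ {x | AvoidsZero x} from hx)]
          gcongr
          linarith [hL (x (Fin.last t))]
        · simp [hx]
    _ = ENNReal.ofReal L * ∑' x : {x : Fin (t + 1) → ℕ | AvoidsZero x}, μ (path X t ⁻¹' {x.1}) := by
        rw [ENNReal.tsum_mul_left, ← _root_.tsum_subtype]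
    _ = ENNReal.ofReal L * μ (path X t ⁻¹' {x | AvoidsZero x}) := by
        rw [tsum_measure_preimage_singleton (Set.to_countable _)
          fun x _ => measurable_path hX.1 t (measurableSet_singleton x)]

lemma IsQuenchedWalk.ofReal_mul_le_measure_avoidsZero [IsProbabilityMeasure μ]
    (hX : IsQuenchedWalk μ X p) (hp0 : ∀ i, 0 ≤ p i) (hp1 : ∀ i, p i < 1) {L : ℝ}
    (hL : ∀ n, fenv p n ≤ L) (t : ℕ) :
    ENNReal.ofReal (fenv p 1 - 1) * ENNReal.ofReal (1 - p 0)
      ≤ ENNReal.ofReal L * μ (path X t ⁻¹' {x | AvoidsZero x}) := by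
  rcases Nat.eq_zero_or_pos t with rfl | ht
  · have hA0 : path X 0 ⁻¹' {x | AvoidsZero x} = Set.univ :=
      Set.eq_univ_of_forall fun ω s hs => absurd (Fin.fin_one_eq_zero s) hs
    rw [hA0, measure_univ, mul_one]
    calc ENNReal.ofReal (fenv p 1 - 1) * ENNReal.ofReal (1 - p 0)
        ≤ ENNReal.ofReal (fenv p 1 - 1) * 1 := by
          gcongr
          exact ENNReal.ofReal_le_one.2 (by linarith [hp0 0])
      _ ≤ ENNReal.ofReal L := by
          rw [mul_one]
          exact ENNReal.ofReal_le_ofReal (by linarith [hL 1])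
  · refine le_trans ?_ (hX.scaleMass_le hL t)
    induction t, ht using Nat.le_induction with
    | base => exact hX.ofReal_le_scaleMass_one
    | succ t ht ih => rwa [hX.scaleMass_succ hp0 hp1 (by omega)]

theorem IsQuenchedWalk.measure_return_lt_one [IsProbabilityMeasure μ]
    (hX : IsQuenchedWalk μ X p) (hp0 : ∀ i, 0 < p i) (hp1 : ∀ i, p i < 1) {L : ℝ}
    (hL : ∀ n, fenv p n ≤ L) :
    μ {ω | ∃ t, 1 ≤ t ∧ X t ω = 0} < 1 := by
  set A : ℕ → Set Ω := fun t => path X t ⁻¹' {x | AvoidsZero x}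
  set a := ENNReal.ofReal (fenv p 1 - 1) * ENNReal.ofReal (1 - p 0)
  have ha : a ≠ 0 := by
    have : 1 < fenv p 1 := by
      rw [fenv_succ, fenv_zero, Denv_succ]
      simp [Denv, div_pos (hp0 0) (sub_pos.2 (hp1 0))]
    simp [a, this, hp1 0]
  have hAm : ∀ t, MeasurableSet (A t) := fun t =>
    measurable_path hX.1 t (Set.to_countable _).measurableSet
  have hlim : a / ENNReal.ofReal L ≤ μ (⋂ t, A t) := by
    rw [antitone_preimage_path_avoidsZero.measure_iInter (fun t => (hAm t).nullMeasurableSet)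
      ⟨0, measure_ne_top μ _⟩]
    exact le_iInf fun t => ENNReal.div_le_of_le_mul'
      (hX.ofReal_mul_le_measure_avoidsZero (fun i => (hp0 i).le) hp1 hL t)
  rw [setOf_exists_return_eq_compl, prob_compl_eq_one_sub (MeasurableSet.iInter hAm)]
  exact ENNReal.sub_lt_self ENNReal.one_ne_top one_ne_zero
    (ne_of_gt (lt_of_lt_of_le (ENNReal.div_pos ha ENNReal.ofReal_ne_top) hlim))

end Walk

open ProbabilityTheory

lemma Finset.sum_rpow_le_rpow_sum {ι : Type*} (s : Finset ι) {f : ι → ℝ}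
    (hf : ∀ i ∈ s, 0 ≤ f i) {r : ℝ} (hr : 1 ≤ r) :
    ∑ i ∈ s, f i ^ r ≤ (∑ i ∈ s, f i) ^ r := by
  classical
  induction s using Finset.induction with
  | empty => simp [Real.zero_rpow (by linarith : r ≠ 0)]
  | insert a s ha ih =>
    have hs : ∀ i ∈ s, 0 ≤ f i := fun i hi => hf i (mem_insert_of_mem hi)
    rw [sum_insert ha, sum_insert ha]
    calc f a ^ r + ∑ i ∈ s, f i ^ r ≤ f a ^ r + (∑ i ∈ s, f i) ^ r := by gcongr; exact ih hs
      _ ≤ (f a + ∑ i ∈ s, f i) ^ r :=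
        Real.add_rpow_le_rpow_add (hf a (mem_insert_self a s)) (sum_nonneg hs) hr

lemma isLittleO_rpow_rpow_atTop {r s : ℝ} (h : r < s) :
    (fun x : ℝ => x ^ r) =o[atTop] fun x => x ^ s := by
  refine (Asymptotics.isLittleO_iff_tendsto' ?_).2 ?_
  · filter_upwards [eventually_gt_atTop 0] with x hx h0
    exact absurd h0 (Real.rpow_pos_of_pos hx s).ne'
  · refine (tendsto_rpow_neg_atTop (sub_pos.2 h)).congr' ?_
    filter_upwards [eventually_gt_atTop 0] with x hx
    rw [← Real.rpow_sub hx, neg_sub]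

lemma summable_exp_neg_mul_pow {a b : ℝ} (ha : 0 < a) (hb : 1 < b) :
    Summable fun k : ℕ => Real.exp (-(a * b ^ k)) := by
  have hr : Real.exp (-(a * (b - 1))) < 1 := Real.exp_lt_one_iff.2 (by nlinarith)
  refine (summable_geometric_of_lt_one (Real.exp_nonneg _) hr).of_nonneg_of_le
    (fun k => (Real.exp_pos _).le) fun k => ?_
  rw [← Real.exp_nat_mul, Real.exp_le_exp]
  have hbern : 1 + k * (b - 1) ≤ b ^ k := by
    simpa using one_add_mul_le_pow (by linarith : -2 ≤ b - 1) k
  nlinarith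

lemma eventually_mul_rpow_add_self_le_rpow_div_four {C r α : ℝ} (hr : r < α) (hα : 1 < α) :
    ∀ᶠ n : ℕ in atTop, C * (n : ℝ) ^ r + n ≤ ((n : ℝ) / 4) ^ α := by
  have ho : (fun x : ℝ => C * x ^ r + x) =o[atTop] fun x => x ^ α :=
    ((isLittleO_rpow_rpow_atTop hr).const_mul_left C).add
      ((isLittleO_rpow_rpow_atTop hα).congr_left fun x => Real.rpow_one x)
  have hreal : ∀ᶠ x : ℝ in atTop, C * x ^ r + x ≤ (x / 4) ^ α := by
    filter_upwards [ho.bound (by positivity : (0 : ℝ) < 4⁻¹ ^ α), eventually_ge_atTop 0]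
      with x hx hx0
    rw [Real.norm_eq_abs, Real.norm_of_nonneg (by positivity)] at hx
    rw [div_eq_mul_inv, Real.mul_rpow hx0 (by norm_num), mul_comm (x ^ α)]
    exact (le_abs_self _).trans hx
  exact tendsto_natCast_atTop_atTop.eventually hreal

lemma eventually_sum_range_le_neg {a : ℕ → ℝ} {C r α : ℝ} (hr : r < α) (hα : 1 < α)
    (hpos : ∀ᶠ n : ℕ in atTop, ∑ j ∈ range n, max (a j) 0 ≤ C * (n : ℝ) ^ r)
    (hjump : ∀ᶠ k : ℕ in atTop, ∃ m ∈ Ico (2 ^ k) (2 ^ (k + 1)), a m < -(m : ℝ) ^ α) :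
    ∀ᶠ n : ℕ in atTop, ∑ j ∈ range n, a j ≤ -(n : ℝ) := by
  obtain ⟨K, hK⟩ := eventually_atTop.1 hjump
  filter_upwards [hpos, eventually_mul_rpow_add_self_le_rpow_div_four (C := C) hr hα,
    eventually_ge_atTop (2 ^ (K + 1))] with n hpos_n hgrowth hn
  have hn0 : n ≠ 0 := (Nat.pos_of_ne_zero (by positivity)).trans_le hn |>.ne'
  have hlog : K + 1 ≤ Nat.log 2 n := Nat.le_log_of_pow_le one_lt_two hn
  set k := Nat.log 2 n - 1
  have hlow : 2 ^ (k + 1) ≤ n := by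
    rw [show k + 1 = Nat.log 2 n by omega]; exact Nat.pow_log_le_self 2 hn0
  have hhigh : n < 4 * 2 ^ k := by
    rw [show 4 * 2 ^ k = 2 ^ (Nat.log 2 n + 1) by rw [show Nat.log 2 n + 1 = k + 2 by omega]; ring]
    exact Nat.lt_pow_succ_log_self one_lt_two n
  obtain ⟨m, hm, ham⟩ := hK k (by omega)
  rw [mem_Ico] at hm
  have hmn : m < n := by omega
  have hnm : (n : ℝ) / 4 ≤ m := by
    rw [div_le_iff₀ (by norm_num)]; exact_mod_cast (by omega : n ≤ m * 4)
  calc ∑ j ∈ range n, a j = a m + ∑ j ∈ (range n).erase m, a j :=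
        (add_sum_erase _ _ (mem_range.2 hmn)).symm
    _ ≤ -((n : ℝ) / 4) ^ α + ∑ j ∈ range n, max (a j) 0 := by
        gcongr ?_ + ?_
        · linarith [Real.rpow_le_rpow (by positivity) hnm (by linarith : 0 ≤ α)]
        · exact (sum_le_sum fun j _ => le_max_left _ _).trans
            (sum_le_sum_of_subset_of_nonneg (erase_subset _ _) fun j _ _ => le_max_right _ _)
    _ ≤ -n := by linarith

lemma measureReal_biInter_compl_Ico_two_pow_le {Ω : Type*} [MeasurableSpace Ω] {P : Measure Ω}
    {T : ℕ → Set Ω} (hT : ∀ m, MeasurableSet (T m)) (hindep : iIndepSet T P) {c β : ℝ}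
    (hc : 0 ≤ c) (hβ : 0 ≤ β) {k : ℕ}
    (hP : ∀ m : ℕ, m ∈ Ico (2 ^ k) (2 ^ (k + 1)) → c * (m : ℝ) ^ (-β) ≤ P.real (T m)) :
    P.real (⋂ m ∈ Ico (2 ^ k) (2 ^ (k + 1)), (T m)ᶜ)
      ≤ Real.exp (-(c * 2 ^ (-β) * (2 * 2 ^ (-β)) ^ k)) := by
  have := hindep.isProbabilityMeasure
  have hblock : ∀ m ∈ Ico (2 ^ k) (2 ^ (k + 1)),
      P.real (T m)ᶜ ≤ Real.exp (-(c * ((2 : ℝ) ^ (k + 1)) ^ (-β))) := by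
    intro m hm
    have hm' := mem_Ico.1 hm
    have hm0 : (0 : ℝ) < m := by exact_mod_cast (Nat.two_pow_pos k).trans_le hm'.1
    rw [probReal_compl_eq_one_sub (hT m)]
    calc 1 - P.real (T m) ≤ Real.exp (-P.real (T m)) := by
          linarith [Real.add_one_le_exp (-P.real (T m))]
      _ ≤ _ := by
          gcongr
          calc c * ((2 : ℝ) ^ (k + 1)) ^ (-β) ≤ c * (m : ℝ) ^ (-β) :=
                mul_le_mul_of_nonneg_left (Real.rpow_le_rpow_of_nonpos hm0
                  (by exact_mod_cast hm'.2.le) (neg_nonpos.2 hβ)) hc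
            _ ≤ P.real (T m) := hP m hm
  have hprod : P.real (⋂ m ∈ Ico (2 ^ k) (2 ^ (k + 1)), (T m)ᶜ)
      = ∏ m ∈ Ico (2 ^ k) (2 ^ (k + 1)), P.real (T m)ᶜ := by
    simp only [Measure.real, ← ENNReal.toReal_prod]
    rw [((iIndepSet_iff_iIndep _ _).1 hindep).meas_biInter fun m _ =>
      (MeasurableSpace.measurableSet_generateFrom (Set.mem_singleton _)).compl]
  have hcard : #(Ico (2 ^ k) (2 ^ (k + 1))) = 2 ^ k := by
    rw [Nat.card_Ico, pow_succ]; omega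
  have hpow : ((2 : ℝ) ^ (k + 1)) ^ (-β) = (2 ^ (-β)) ^ (k + 1) := by
    rw [← Real.rpow_natCast, ← Real.rpow_mul zero_le_two, mul_comm, Real.rpow_mul zero_le_two,
      Real.rpow_natCast]
  calc P.real (⋂ m ∈ Ico (2 ^ k) (2 ^ (k + 1)), (T m)ᶜ)
      ≤ ∏ m ∈ Ico (2 ^ k) (2 ^ (k + 1)), Real.exp (-(c * ((2 : ℝ) ^ (k + 1)) ^ (-β))) := by
        rw [hprod]; exact prod_le_prod (fun m _ => measureReal_nonneg) hblock
    _ = Real.exp (-(c * 2 ^ (-β) * (2 * 2 ^ (-β)) ^ k)) := by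
        rw [prod_const, hcard, ← Real.exp_nat_mul, hpow]
        congr 1
        push_cast
        ring

lemma ae_eventually_exists_mem_Ico_two_pow {Ω : Type*} [MeasurableSpace Ω] {P : Measure Ω}
    {T : ℕ → Set Ω} (hT : ∀ m, MeasurableSet (T m)) (hindep : iIndepSet T P) {c β : ℝ}
    (hc : 0 < c) (hβ : β < 1) (hP : ∀ᶠ m : ℕ in atTop, c * (m : ℝ) ^ (-β) ≤ P.real (T m)) :
    ∀ᵐ ω ∂P, ∀ᶠ k : ℕ in atTop, ∃ m ∈ Ico (2 ^ k) (2 ^ (k + 1)), ω ∈ T m := by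
  wlog hβ0 : 0 ≤ β generalizing β
  · refine this (max_lt hβ one_pos) ?_ (le_max_right _ _)
    filter_upwards [hP, eventually_ge_atTop 1] with m hm hm1
    refine le_trans ?_ hm
    gcongr
    · exact_mod_cast hm1
    · exact le_max_left _ _
  have := hindep.isProbabilityMeasure
  set B : ℕ → Set Ω := fun k => ⋂ m ∈ Ico (2 ^ k) (2 ^ (k + 1)), (T m)ᶜ
  have hu : 1 / 2 < (2 : ℝ) ^ (-β) :=
    calc 1 / 2 = (2 : ℝ) ^ (-1 : ℝ) := by norm_num [Real.rpow_neg_one]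
      _ < 2 ^ (-β) := Real.rpow_lt_rpow_of_exponent_lt one_lt_two (by linarith)
  obtain ⟨M, hM⟩ := eventually_atTop.1 hP
  have hsum : Summable fun k => P.real (B k) := by
    refine (summable_exp_neg_mul_pow (a := c * 2 ^ (-β)) (b := 2 * 2 ^ (-β)) (by positivity)
      (by linarith)).of_norm_bounded_eventually_nat ?_
    filter_upwards [eventually_ge_atTop M] with k hk
    rw [Real.norm_of_nonneg measureReal_nonneg]
    exact measureReal_biInter_compl_Ico_two_pow_le hT hindep hc.le hβ0 fun m hm =>
      hM m ((hk.trans Nat.lt_two_pow_self.le).trans (mem_Ico.1 hm).1)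
  have hsum' : ∑' k, P (B k) ≠ ⊤ := by
    simp_rw [← ofReal_measureReal (measure_ne_top P _)]
    rw [← ENNReal.ofReal_tsum_of_nonneg (fun k => measureReal_nonneg) hsum]
    exact ENNReal.ofReal_ne_top
  filter_upwards [ae_eventually_notMem hsum'] with ω hω
  simpa [B, and_assoc] using hω

lemma ae_exists_eventually_sum_posPart_le {Ω : Type*} [MeasurableSpace Ω] {P : Measure Ω}
    {ζ : ℕ → Ω → ℝ} (hindep : Pairwise fun i j => IndepFun (ζ i) (ζ j) P)
    (hident : ∀ i, IdentDistrib (ζ i) (ζ 0) P P) {q : ℝ} (hq : 0 < q) (hq1 : q ≤ 1)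
    (hmom : Integrable (fun ω => max (ζ 0 ω) 0 ^ q) P) :
    ∀ᵐ ω ∂P, ∃ C, ∀ᶠ n : ℕ in atTop, ∑ j ∈ range n, max (ζ j ω) 0 ≤ C * (n : ℝ) ^ q⁻¹ := by
  set φ : ℝ → ℝ := fun x => max x 0 ^ q
  have hφ : Measurable φ := (measurable_id.max measurable_const).pow_const q
  have hφ0 : ∀ x, 0 ≤ φ x := fun x => by positivity
  filter_upwards [strong_law_ae_real (fun i ω => φ (ζ i ω)) hmom
    (fun i j hij => (hindep hij).comp hφ hφ) fun i => (hident i).comp hφ] with ω hω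
  set A := P[fun ω => φ (ζ 0 ω)]
  have hA : 0 ≤ A := integral_nonneg fun ω => hφ0 _
  refine ⟨(A + 1) ^ q⁻¹, ?_⟩
  filter_upwards [hω.eventually (gt_mem_nhds (lt_add_one A)), eventually_gt_atTop 0]
    with n hn hn0
  rw [div_lt_iff₀ (by exact_mod_cast hn0)] at hn
  calc ∑ j ∈ range n, max (ζ j ω) 0 = ∑ j ∈ range n, φ (ζ j ω) ^ q⁻¹ :=
        sum_congr rfl fun j _ => (Real.rpow_rpow_inv (le_max_right _ _) hq.ne').symm
    _ ≤ (∑ j ∈ range n, φ (ζ j ω)) ^ q⁻¹ :=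
        sum_rpow_le_rpow_sum _ (fun j _ => hφ0 _) ((one_le_inv₀ hq).2 hq1)
    _ ≤ ((A + 1) * n) ^ q⁻¹ := by gcongr
    _ = (A + 1) ^ q⁻¹ * (n : ℝ) ^ q⁻¹ := Real.mul_rpow (by positivity) (by positivity)

theorem ae_eventually_sum_range_le_neg {Ω : Type*} [MeasurableSpace Ω] {P : Measure Ω}
    {ζ : ℕ → Ω → ℝ} (hmeas : ∀ n, Measurable (ζ n)) (hindep : iIndepFun ζ P)
    (hident : ∀ n, IdentDistrib (ζ n) (ζ 0) P P) {q γ c : ℝ} (hq : 0 < q) (hq1 : q ≤ 1)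
    (hc : 0 < c) (hγ : γ < q) (hmom : Integrable (fun ω => max (ζ 0 ω) 0 ^ q) P)
    (htail : ∀ᶠ x : ℝ in atTop, c * x ^ (-γ) ≤ P.real {ω | ζ 0 ω < -x}) :
    ∀ᵐ ω ∂P, ∀ᶠ n : ℕ in atTop, ∑ j ∈ range n, ζ j ω ≤ -(n : ℝ) := by
  -- `α⁻¹` is the midpoint of `max γ 0` and `q`
  set α := 2 / (max γ 0 + q)
  have hγq : max γ 0 < q := max_lt hγ hq
  have hα0 : 0 < α := by positivity
  have hαinv : α⁻¹ = (max γ 0 + q) / 2 := by simp [α]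
  have hqα : q⁻¹ < α := by
    rw [← inv_lt_inv₀ hα0 (by positivity), inv_inv, hαinv]; linarith
  have hα1 : 1 < α := ((one_le_inv₀ hq).2 hq1).trans_lt hqα
  have hαγ : α * γ < 1 := by
    rw [← lt_div_iff₀' hα0, one_div, hαinv]; linarith [le_max_left γ 0]
  set T : ℕ → Set Ω := fun m => ζ m ⁻¹' Set.Iio (-(m : ℝ) ^ α)
  have hT : ∀ m, MeasurableSet (T m) := fun m => hmeas m measurableSet_Iio
  have hTindep : iIndepSet T P := (iIndepSet_iff_meas_biInter hT).2 fun s =>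
    hindep.meas_biInter fun m _ => ⟨_, measurableSet_Iio, rfl⟩
  have hTprob : ∀ᶠ m : ℕ in atTop, c * (m : ℝ) ^ (-(α * γ)) ≤ P.real (T m) := by
    have hgrow : Tendsto (fun m : ℕ => (m : ℝ) ^ α) atTop atTop :=
      (tendsto_rpow_atTop hα0).comp tendsto_natCast_atTop_atTop
    filter_upwards [hgrow.eventually htail] with m hm
    rw [measureReal_def, (hident m).measure_mem_eq measurableSet_Iio, ← measureReal_def]
    rwa [← Real.rpow_mul (Nat.cast_nonneg m), mul_neg] at hm
  filter_upwards [ae_exists_eventually_sum_posPart_le (fun i j hij => hindep.indepFun hij)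
    hident hq hq1 hmom, ae_eventually_exists_mem_Ico_two_pow hT hTindep hc hαγ hTprob]
    with ω ⟨C, hC⟩ hjump
  exact eventually_sum_range_le_neg hqα hα1 hC hjump

lemma summable_exp_sum_range_of_eventually_le_neg {a : ℕ → ℝ}
    (h : ∀ᶠ n : ℕ in atTop, ∑ j ∈ range n, a j ≤ -(n : ℝ)) :
    Summable fun n => Real.exp (∑ j ∈ range n, a j) := by
  refine (summable_geometric_of_lt_one (Real.exp_nonneg (-1))
    (Real.exp_lt_one_iff.2 (by norm_num))).of_norm_bounded_eventually_nat ?_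
  filter_upwards [h] with n hn
  rw [Real.norm_of_nonneg (Real.exp_nonneg _), ← Real.exp_nat_mul, Real.exp_le_exp]
  linarith

/-- suppose `ζ_0, ζ_1, …` are i.i.d. with `E[(ζ_0^+)^p] < ∞` for some `p > 0`
and `P[ζ_0 < −x] ≥ c x^{-γ}` for some `c > 0`, `γ < min(1,p)` and all large `x`. If the
environment is given by `log(p_n/q_n) = ζ_n`, i.e. `p_n = e^{ζ_n}/(1+e^{ζ_n})`, then for
almost every environment, `f(n) = ∑_{i=0}^n exp(∑_{j<i} ζ_j)` converges to a finite limit,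
and hence the quenched walk is transient (the probability of returning to `0` is `< 1`). -/
theorem statement16 {E : Type*} [MeasurableSpace E] (P : Measure E) [IsProbabilityMeasure P]
    (ζ : ℕ → E → ℝ) (hmeas : ∀ n, Measurable (ζ n))
    (hindep : iIndepFun ζ P)
    (hident : ∀ n, Measure.map (ζ n) P = Measure.map (ζ 0) P)
    (pe γ c : ℝ) (hpe : 0 < pe) (hc : 0 < c) (hγ : γ < min 1 pe)
    (hmom : Integrable (fun e => (max (ζ 0 e) 0) ^ pe) P)
    (htail : ∀ᶠ x : ℝ in atTop, c * x ^ (-γ) ≤ (P {e | ζ 0 e < -x}).toReal) :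
    ∀ᵐ e ∂P,
      (∃ L : ℝ, Tendsto
          (fun n : ℕ => ∑ i ∈ Finset.range (n + 1),
            Real.exp (∑ j ∈ Finset.range i, ζ j e)) atTop (nhds L))
      ∧ ∀ (Ω : Type) (_ : MeasurableSpace Ω) (μ : Measure Ω), IsProbabilityMeasure μ →
          ∀ X : ℕ → Ω → ℕ,
            IsQuenchedWalk μ X (fun i => Real.exp (ζ i e) / (1 + Real.exp (ζ i e))) →
            μ {ω | ∃ t, 1 ≤ t ∧ X t ω = 0} < 1 := by
  have hq : 0 < min 1 pe := lt_min one_pos hpe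
  have hmom' : Integrable (fun e => max (ζ 0 e) 0 ^ min 1 pe) P := by
    have := integrable_norm_rpow_of_le (f := fun e => max (ζ 0 e) 0)
      ((hmeas 0).max measurable_const).aestronglyMeasurable hq.le hpe.le (min_le_right _ _)
      (by simpa [abs_of_nonneg] using hmom)
    simpa [abs_of_nonneg] using this
  have hident' : ∀ n, IdentDistrib (ζ n) (ζ 0) P P := fun n =>
    ⟨(hmeas n).aemeasurable, (hmeas 0).aemeasurable, hident n⟩
  filter_upwards [ae_eventually_sum_range_le_neg hmeas hindep hident' hq (min_le_left _ _) hc hγ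
    hmom' htail] with e he
  have hsum := summable_exp_sum_range_of_eventually_le_neg he
  refine ⟨⟨_, hsum.hasSum.tendsto_sum_nat.comp (tendsto_add_atTop_nat 1)⟩,
    fun Ω _ μ _ X hX => ?_⟩
  have hf : ∀ n, fenv (fun i => Real.exp (ζ i e) / (1 + Real.exp (ζ i e))) n
      ≤ ∑' i, Real.exp (∑ j ∈ range i, ζ j e) := fun n => by
    simp only [fenv, Denv_logistic]
    exact hsum.sum_le_tsum _ fun i _ => (Real.exp_pos _).le
  exact hX.measure_return_lt_one (fun i => by positivity)
    (fun i => (div_lt_one (by positivity)).2 (by linarith)) hf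
end
end
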